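/- arXiv:math/0403157 — 10 statements merged into one kernel-verified Lean document; each statement's English description precedes it below -/
import Mathlib

section
/- Let p be an odd prime and α a non-square in 𝔽_p. In Ā_p = ℍ[𝔽_p, α, 0], let x = c·j + d·k with (c,d) ≠ (0,0). Then the conjugation orbit of x under the invertible elements of the form a + b·i, i.e. the set { y ∈ Ā_p | ∃ a b, a² − αb² ≠ 0 and y·(a + b·i) = (a + b·i)·x }, has exactly p + 1 elements. -/
/-!
Identify the nilradical `K·j ⊕ K·k` with the field `K(i)` via `c·j + d·k ↦ c + d·i`. Left and
right multiplication by `u = a + b·i` become multiplication by `u` and by its conjugate `ū`, so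
the conjugate of `x` by `u` is `x · u / ū`. It depends only on the point `[a : b]` of the
projective line, and it determines that point: if `u` and `u'` give the same conjugate then,
since they commute, `u x u' = u' x u`, whose `j`- and `k`-components are `2αd (ab' - a'b)` and
`2c (ab' - a'b)`. So for `2 ≠ 0` the orbit is in bijection with `ℙ¹(𝔽_p)`, which has `p + 1`
points.
-/

open Quaternion

namespace QuaternionAlgebra

theorem isUnit_of_re_star_mul_self_ne_zero {K : Type*} [Field K] {c₁ c₂ c₃ : K}
    {q : ℍ[K, c₁, c₂, c₃]} (h : (star q * q).re ≠ 0) : IsUnit q := by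
  set n := (star q * q).re
  have hn : ((n⁻¹ : K) : ℍ[K, c₁, c₂, c₃]) * n = 1 := by
    rw [← coe_mul, inv_mul_cancel₀ h, coe_one]
  refine ⟨⟨q, (n⁻¹ : K) * star q, ?_, ?_⟩, rfl⟩
  · rw [← mul_assoc, ← coe_commutes, mul_assoc, ← star_comm_self', star_mul_eq_coe, hn]
  · rw [mul_assoc, star_mul_eq_coe, hn]

end QuaternionAlgebra

section

variable {K : Type*} [Field K] {α : K}

theorem sq_sub_mul_sq_ne_zero_iff (hα : ¬IsSquare α) {a b : K} :
    a ^ 2 - α * b ^ 2 ≠ 0 ↔ (a, b) ≠ 0 := by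
  refine ⟨?_, fun hab hN => hab ?_⟩
  · rintro hN ⟨⟩
    simp at hN
  have hb : b = 0 := by
    by_contra hb
    exact hα ⟨a / b, by field_simp; linear_combination -hN⟩
  subst hb
  simpa using hN

theorem isUnit_mk {a b : K} (h : a ^ 2 - α * b ^ 2 ≠ 0) :
    IsUnit (⟨a, b, 0, 0⟩ : ℍ[K, α, 0]) := by
  refine QuaternionAlgebra.isUnit_of_re_star_mul_self_ne_zero ?_
  convert h using 1
  simp only [QuaternionAlgebra.star_mk, QuaternionAlgebra.mk_mul_mk, zero_mul, mul_zero,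
    add_zero, neg_zero, mul_neg, neg_mul, sub_zero, sub_self]
  ring

/-- Under `c·j + d·k ↦ c + d·i` this is `(c + d·i) · u² / (a² - α b²) = x · u / ū`, the conjugate
of `x = c·j + d·k` by `u = a + b·i`. -/
def conjNilrad (α c d a b : K) : ℍ[K, α, 0] :=
  ⟨0, 0, (c * (a ^ 2 + α * b ^ 2) + 2 * α * a * b * d) / (a ^ 2 - α * b ^ 2),
    (d * (a ^ 2 + α * b ^ 2) + 2 * a * b * c) / (a ^ 2 - α * b ^ 2)⟩

variable {a b c d : K}

theorem conjNilrad_mul_mk (h : a ^ 2 - α * b ^ 2 ≠ 0) :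
    conjNilrad α c d a b * ⟨a, b, 0, 0⟩ = (⟨a, b, 0, 0⟩ : ℍ[K, α, 0]) * ⟨0, 0, c, d⟩ := by
  ext <;> simp [conjNilrad] <;> field_simp <;> ring

theorem mul_mk_eq_mk_mul_iff (h : a ^ 2 - α * b ^ 2 ≠ 0) {y : ℍ[K, α, 0]} :
    y * ⟨a, b, 0, 0⟩ = (⟨a, b, 0, 0⟩ : ℍ[K, α, 0]) * ⟨0, 0, c, d⟩ ↔
      y = conjNilrad α c d a b := by
  rw [← conjNilrad_mul_mk h, (isUnit_mk h).mul_left_inj]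

theorem conjNilrad_mul_mul {t : K} (ht : t ≠ 0) :
    conjNilrad α c d (t * a) (t * b) = conjNilrad α c d a b := by
  simp only [conjNilrad, QuaternionAlgebra.mk.injEq, true_and]
  constructor <;> rw [← mul_div_mul_left _ (a ^ 2 - α * b ^ 2) (pow_ne_zero 2 ht)] <;> ring

theorem mul_eq_mul_of_conjNilrad_eq (h2 : (2 : K) ≠ 0) (hα : α ≠ 0) (hx : (c, d) ≠ 0)
    {a' b' : K} (h : a ^ 2 - α * b ^ 2 ≠ 0) (h' : a' ^ 2 - α * b' ^ 2 ≠ 0)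
    (heq : conjNilrad α c d a b = conjNilrad α c d a' b') : a * b' = a' * b := by
  set u : ℍ[K, α, 0] := ⟨a, b, 0, 0⟩
  set u' : ℍ[K, α, 0] := ⟨a', b', 0, 0⟩
  set y := conjNilrad α c d a b
  have hy : y * u = u * ⟨0, 0, c, d⟩ := (mul_mk_eq_mk_mul_iff h).2 rfl
  have hy' : y * u' = u' * ⟨0, 0, c, d⟩ := (mul_mk_eq_mk_mul_iff h').2 heq
  have hcomm : u * u' = u' * u := by ext <;> simp [u, u'] <;> ring
  have key : u * ⟨0, 0, c, d⟩ * u' = u' * ⟨0, 0, c, d⟩ * u := by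
    rw [← hy, ← hy', mul_assoc, hcomm, mul_assoc]
  have hJ := congrArg QuaternionAlgebra.imJ key
  have hK := congrArg QuaternionAlgebra.imK key
  simp only [QuaternionAlgebra.mk_mul_mk, mul_zero, add_zero, zero_mul, sub_self, sub_zero,
    zero_add, zero_sub, u, u'] at hJ hK
  rw [← sub_eq_zero]
  by_cases hc : c = 0
  · have hd : d ≠ 0 := by rintro rfl; exact hx (by simp [hc])
    have : 2 * α * d * (a * b' - a' * b) = 0 := by linear_combination -hJ
    simpa [h2, hα, hd] using this
  · have : 2 * c * (a * b' - a' * b) = 0 := by linear_combination -hK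
    simpa [h2, hc] using this

theorem exists_smul_eq_of_mul_eq_mul {a' b' : K} (h' : (a', b') ≠ 0)
    (h : a * b' = a' * b) : ∃ t : K, t • (a', b') = (a, b) := by
  simp only [Prod.smul_mk, smul_eq_mul, Prod.mk.injEq]
  rcases eq_or_ne a' 0 with rfl | ha'
  · have hb' : b' ≠ 0 := by rintro rfl; exact h' rfl
    exact ⟨b / b', by simpa [hb', eq_comm] using h, by field_simp⟩
  · exact ⟨a / a', by field_simp, by field_simp; linear_combination h⟩

variable (α c d) in
def conjNilradProj : Projectivization K (K × K) → ℍ[K, α, 0] :=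
  Projectivization.lift (fun v => conjNilrad α c d v.1.1 v.1.2) <| by
    rintro ⟨_, hv⟩ ⟨w, -⟩ t rfl
    exact conjNilrad_mul_mul (left_ne_zero_of_smul hv)

theorem range_conjNilradProj (hα : ¬IsSquare α) :
    Set.range (conjNilradProj α c d) = {y : ℍ[K, α, 0] | ∃ a b : K, a ^ 2 - α * b ^ 2 ≠ 0 ∧
      y * ⟨a, b, 0, 0⟩ = (⟨a, b, 0, 0⟩ : ℍ[K, α, 0]) * ⟨0, 0, c, d⟩} := by
  ext y
  constructor
  · rintro ⟨v, rfl⟩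
    induction v using Projectivization.ind with | h v hv =>
    have hN := (sq_sub_mul_sq_ne_zero_iff hα).2 hv
    exact ⟨v.1, v.2, hN, (mul_mk_eq_mk_mul_iff hN).2 rfl⟩
  · rintro ⟨a, b, hN, hy⟩
    exact ⟨.mk K (a, b) ((sq_sub_mul_sq_ne_zero_iff hα).1 hN),
      ((mul_mk_eq_mk_mul_iff hN).1 hy).symm⟩

theorem conjNilradProj_injective (h2 : (2 : K) ≠ 0) (hα : ¬IsSquare α) (hx : (c, d) ≠ 0) :
    Function.Injective (conjNilradProj α c d) := by
  have hα0 : α ≠ 0 := by rintro rfl; exact hα ⟨0, by ring⟩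
  intro v w
  induction v using Projectivization.ind with | h v hv =>
  induction w using Projectivization.ind with | h w hw =>
  intro heq
  rw [Projectivization.mk_eq_mk_iff']
  exact exists_smul_eq_of_mul_eq_mul hw <| mul_eq_mul_of_conjNilrad_eq h2 hα0 hx
    ((sq_sub_mul_sq_ne_zero_iff hα).2 hv) ((sq_sub_mul_sq_ne_zero_iff hα).2 hw) heq

end

/-- In `Ā_p = ℍ[𝔽_p, α, 0]` (α a non-square), the conjugation orbit of a nonzero
nilradical element `x = c·j + d·k` under the invertible elements `a + b·i`
has exactly `p + 1` elements. -/
theorem orbit_of_nonzero_nilradical_has_card_p_add_one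
    (p : ℕ) [Fact p.Prime] (hp : p ≠ 2) (α : ZMod p) (hα : ¬ IsSquare α)
    (c d : ZMod p) (hx : (c, d) ≠ (0, 0)) :
    {y : ℍ[ZMod p, α, 0] | ∃ a b : ZMod p, a ^ 2 - α * b ^ 2 ≠ 0 ∧
      y * ⟨a, b, 0, 0⟩ = (⟨a, b, 0, 0⟩ : ℍ[ZMod p, α, 0]) * ⟨0, 0, c, d⟩}.ncard = p + 1 := by
  have h2 : (2 : ZMod p) ≠ 0 := Ring.two_ne_zero (by rwa [ZMod.ringChar_zmod_n])
  rw [← range_conjNilradProj hα, Set.ncard_range_of_injective (conjNilradProj_injective h2 hα hx),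
    Projectivization.card_of_finrank_two _ _ (by simp), Nat.card_zmod]
end

section
/- Let p be an odd prime and α a non-square in 𝔽_p. In Ā_p = ℍ[𝔽_p, α, 0], suppose x₁ = c₁·j + d₁·k and x₂ = c₂·j + d₂·k are conjugate by an invertible element of the form a + b·i, i.e. there exist a, b ∈ 𝔽_p with a² − αb² ≠ 0 and (a + b·i)·x₁ = x₂·(a + b·i). Then c₁² − α d₁² = c₂² − α d₂². -/
open Quaternion

/-!
Write `c·j + d·k = (c + d·i)·j` and note `j·(a + b·i) = (a − b·i)·j`. Then
`(a + b·i)·x₁ = x₂·(a + b·i)` becomes `u·z₁ = z₂·ū` in the commutative algebra `𝔽_p[i]`,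
where `u = a + b·i` and `zₙ = cₙ + dₙ·i`. Taking norms there gives `N(u)·N(z₁) = N(u)·N(z₂)`,
and `N(u) = a² − α b² ≠ 0` cancels.
-/

namespace QuadraticAlgebra

variable {R : Type*} [CommRing R] {a b : R}

theorem norm_mk_of_b_eq_zero (x y : R) :
    (⟨x, y⟩ : QuadraticAlgebra R a 0).norm = x ^ 2 - a * y ^ 2 := by
  rw [norm_def]
  ring

theorem norm_eq_norm_of_mul_eq_mul_star [IsLeftCancelMulZero R]
    {u z₁ z₂ : QuadraticAlgebra R a b} (hu : u.norm ≠ 0)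
    (h : u * z₁ = z₂ * star u) : z₁.norm = z₂.norm := by
  refine mul_left_cancel₀ hu ?_
  simpa only [map_mul, norm_star, mul_comm z₂.norm] using congrArg norm h

end QuadraticAlgebra

namespace QuaternionAlgebra

variable {R : Type*} [CommRing R] {α : R}

theorem mk_mul_nilradical_eq_nilradical_mul_mk_iff (a b c₁ d₁ c₂ d₂ : R) :
    (⟨a, b, 0, 0⟩ : ℍ[R, α, 0]) * ⟨0, 0, c₁, d₁⟩ = ⟨0, 0, c₂, d₂⟩ * ⟨a, b, 0, 0⟩ ↔
      (⟨a, b⟩ : QuadraticAlgebra R α 0) * ⟨c₁, d₁⟩ = ⟨c₂, d₂⟩ * star ⟨a, b⟩ := by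
  simp only [QuaternionAlgebra.ext_iff, QuadraticAlgebra.ext_iff, mk_mul_mk,
    QuadraticAlgebra.mk_mul_mk, QuadraticAlgebra.star_mk]
  constructor
  · rintro ⟨-, -, hj, hk⟩
    exact ⟨by linear_combination hj, by linear_combination hk⟩
  · rintro ⟨hre, him⟩
    exact ⟨by ring, by ring, by linear_combination hre, by linear_combination him⟩

end QuaternionAlgebra

theorem conjugate_nilradical_elements_have_equal_norm_general
    (p : ℕ) [Fact p.Prime] (α : ZMod p)
    (c₁ d₁ c₂ d₂ a b : ZMod p) (hu : a ^ 2 - α * b ^ 2 ≠ 0)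
    (hconj : (⟨a, b, 0, 0⟩ : ℍ[ZMod p, α, 0]) * ⟨0, 0, c₁, d₁⟩ =
      (⟨0, 0, c₂, d₂⟩ : ℍ[ZMod p, α, 0]) * ⟨a, b, 0, 0⟩) :
    c₁ ^ 2 - α * d₁ ^ 2 = c₂ ^ 2 - α * d₂ ^ 2 := by
  have hnorm := QuadraticAlgebra.norm_eq_norm_of_mul_eq_mul_star
    (by rwa [QuadraticAlgebra.norm_mk_of_b_eq_zero])
    ((QuaternionAlgebra.mk_mul_nilradical_eq_nilradical_mul_mk_iff _ _ _ _ _ _).1 hconj)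
  rwa [QuadraticAlgebra.norm_mk_of_b_eq_zero, QuadraticAlgebra.norm_mk_of_b_eq_zero] at hnorm

/-- In `Ā_p = ℍ[𝔽_p, α, 0]` (α a non-square), if `x₁ = c₁·j + d₁·k` and
`x₂ = c₂·j + d₂·k` are conjugate by an invertible element `a + b·i`, then
`c₁² − α d₁² = c₂² − α d₂²`. -/
theorem conjugate_nilradical_elements_have_equal_norm
    (p : ℕ) [Fact p.Prime] (hp : p ≠ 2) (α : ZMod p) (hα : ¬ IsSquare α)
    (c₁ d₁ c₂ d₂ a b : ZMod p) (hu : a ^ 2 - α * b ^ 2 ≠ 0)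
    (hconj : (⟨a, b, 0, 0⟩ : ℍ[ZMod p, α, 0]) * ⟨0, 0, c₁, d₁⟩ =
      (⟨0, 0, c₂, d₂⟩ : ℍ[ZMod p, α, 0]) * ⟨a, b, 0, 0⟩) :
    c₁ ^ 2 - α * d₁ ^ 2 = c₂ ^ 2 - α * d₂ ^ 2 :=
  conjugate_nilradical_elements_have_equal_norm_general p α c₁ d₁ c₂ d₂ a b hu hconj
end

section
/- Let p be an odd prime and α a non-square in 𝔽_p. In Ā_p = ℍ[𝔽_p, α, 0], for any c₁, d₁, c₂, d₂ ∈ 𝔽_p, the elements x₁ = c₁·j + d₁·k and x₂ = c₂·j + d₂·k are conjugate by an invertible element of the form a + b·i (i.e. there exist a, b with a² − αb² ≠ 0 and (a + b·i)·x₁ = x₂·(a + b·i)) if and only if c₁² − α d₁² = c₂² − α d₂². -/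
/-!
Write `x = c j + d k` as `(c + d i) j` and identify `a + b i` with an element of
`K = F(√α)`. Since `j z = z̄ j`, the equation `z x₁ = x₂ z` becomes `z u₁ = u₂ z̄` in `K`.
Taking norms shows `N u₁ = N u₂`. Conversely, if the norms agree and `u₁ ≠ 0`, then
`u₂ / u₁` has norm `1`, so by Hilbert 90 it is `z / z̄` for some `z ≠ 0`.
-/

open Quaternion

namespace QuadraticAlgebra

variable {R : Type*} [CommRing R] {a : R}

theorem norm_mk_eq_sq_sub_mul_sq (x y : R) :
    norm (⟨x, y⟩ : QuadraticAlgebra R a 0) = x ^ 2 - a * y ^ 2 := by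
  rw [norm_def]
  ring

theorem star_omega_eq_neg : star (ω : QuadraticAlgebra R a 0) = -ω := by
  ext <;> simp

theorem norm_eq_of_mul_eq_mul_star [IsDomain R] {z u₁ u₂ : QuadraticAlgebra R a 0}
    (hz : norm z ≠ 0) (h : z * u₁ = u₂ * star z) : norm u₁ = norm u₂ := by
  apply mul_left_cancel₀ hz
  rw [← map_mul, h, map_mul, norm_star, mul_comm]

section Field

variable {K : Type*} [Field K] {a : K} [Fact (∀ r, r ^ 2 ≠ a + 0 * r)]

theorem exists_eq_mul_star_of_norm_eq_one {t : QuadraticAlgebra K a 0} (ht : norm t = 1) :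
    ∃ z, norm z ≠ 0 ∧ z = t * star z := by
  by_cases h : t = -1
  · refine ⟨ω, ?_, ?_⟩
    · rw [Ne, norm_eq_zero_iff_eq_zero, QuadraticAlgebra.ext_iff]
      simp
    · rw [h, star_omega_eq_neg, neg_one_mul, neg_neg]
  · have hz : 1 + t ≠ 0 := fun h' => h (eq_neg_of_add_eq_zero_right h')
    refine ⟨1 + t, by rwa [Ne, norm_eq_zero_iff_eq_zero], ?_⟩
    have ht' : t * star t = 1 := by rw [← algebraMap_norm_eq_mul_star, ht, map_one]
    rw [star_add, star_one, mul_add, ht', mul_one, add_comm]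

theorem exists_mul_eq_mul_star_of_norm_eq {u₁ u₂ : QuadraticAlgebra K a 0}
    (h : norm u₁ = norm u₂) : ∃ z, norm z ≠ 0 ∧ z * u₁ = u₂ * star z := by
  by_cases hu₁ : u₁ = 0
  · have hu₂ : u₂ = 0 := by rwa [← norm_eq_zero_iff_eq_zero, ← h, norm_eq_zero_iff_eq_zero]
    exact ⟨1, by simp, by simp [hu₁, hu₂]⟩
  · have hnorm : norm (u₂ / u₁) = 1 := by
      have hN : norm u₁ ≠ 0 := by rwa [Ne, norm_eq_zero_iff_eq_zero]
      apply mul_right_cancel₀ hN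
      rw [← map_mul, div_mul_cancel₀ _ hu₁, one_mul, h]
    obtain ⟨z, hz, hz_eq⟩ := exists_eq_mul_star_of_norm_eq_one hnorm
    refine ⟨z, hz, ?_⟩
    calc z * u₁ = u₂ / u₁ * star z * u₁ := by rw [← hz_eq]
      _ = u₂ * star z := by rw [mul_right_comm, div_mul_cancel₀ _ hu₁]

end Field

end QuadraticAlgebra

theorem quaternion_mul_eq_mul_iff_mul_eq_mul_star {R : Type*} [CommRing R] (α β : R)
    (a b c₁ d₁ c₂ d₂ : R) :
    (⟨a, b, 0, 0⟩ : ℍ[R, α, β]) * ⟨0, 0, c₁, d₁⟩ = ⟨0, 0, c₂, d₂⟩ * ⟨a, b, 0, 0⟩ ↔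
      (⟨a, b⟩ : QuadraticAlgebra R α 0) * ⟨c₁, d₁⟩ = ⟨c₂, d₂⟩ * star ⟨a, b⟩ := by
  simp only [QuaternionAlgebra.ext_iff, QuadraticAlgebra.ext_iff, QuaternionAlgebra.re_mul,
    QuaternionAlgebra.imI_mul, QuaternionAlgebra.imJ_mul, QuaternionAlgebra.imK_mul,
    QuadraticAlgebra.re_mul, QuadraticAlgebra.im_mul, QuadraticAlgebra.re_star,
    QuadraticAlgebra.im_star]
  ring_nf
  simp only [true_and]

open QuadraticAlgebra in
theorem conjugate_nilradical_iff_equal_norm_general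
    (p : ℕ) [Fact p.Prime] (α : ZMod p) (hα : ¬ IsSquare α)
    (c₁ d₁ c₂ d₂ : ZMod p) :
    (∃ a b : ZMod p, a ^ 2 - α * b ^ 2 ≠ 0 ∧
      (⟨a, b, 0, 0⟩ : ℍ[ZMod p, α, 0]) * ⟨0, 0, c₁, d₁⟩ =
        (⟨0, 0, c₂, d₂⟩ : ℍ[ZMod p, α, 0]) * ⟨a, b, 0, 0⟩) ↔
    c₁ ^ 2 - α * d₁ ^ 2 = c₂ ^ 2 - α * d₂ ^ 2 := by
  have : Fact (∀ r : ZMod p, r ^ 2 ≠ α + 0 * r) :=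
    ⟨fun r hr => hα ⟨r, by rw [zero_mul, add_zero] at hr; rw [← hr, sq]⟩⟩
  simp only [quaternion_mul_eq_mul_iff_mul_eq_mul_star, ← norm_mk_eq_sq_sub_mul_sq]
  constructor
  · rintro ⟨a, b, hz, h⟩
    exact norm_eq_of_mul_eq_mul_star hz h
  · intro h
    obtain ⟨⟨a, b⟩, hz, h⟩ := exists_mul_eq_mul_star_of_norm_eq h
    exact ⟨a, b, hz, h⟩

/-- In `Ā_p = ℍ[𝔽_p, α, 0]` (α a non-square), `x₁ = c₁·j + d₁·k` and
`x₂ = c₂·j + d₂·k` are conjugate by an invertible element `a + b·i` if and only if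
`c₁² − α d₁² = c₂² − α d₂²`. -/
theorem conjugate_nilradical_iff_equal_norm
    (p : ℕ) [Fact p.Prime] (hp : p ≠ 2) (α : ZMod p) (hα : ¬ IsSquare α)
    (c₁ d₁ c₂ d₂ : ZMod p) :
    (∃ a b : ZMod p, a ^ 2 - α * b ^ 2 ≠ 0 ∧
      (⟨a, b, 0, 0⟩ : ℍ[ZMod p, α, 0]) * ⟨0, 0, c₁, d₁⟩ =
        (⟨0, 0, c₂, d₂⟩ : ℍ[ZMod p, α, 0]) * ⟨a, b, 0, 0⟩) ↔
    c₁ ^ 2 - α * d₁ ^ 2 = c₂ ^ 2 - α * d₂ ^ 2 :=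
  conjugate_nilradical_iff_equal_norm_general p α hα c₁ d₁ c₂ d₂
end

section
/- Let p be an odd prime and α a non-square in 𝔽_p = ZMod p. Then for every nonzero k ∈ 𝔽_p, the number of pairs (c, d) ∈ 𝔽_p × 𝔽_p with c² − α·d² = k is exactly p + 1. -/
/-!
Counting fibrewise over `d`, the equation `c² = k + α d²` has `1 + χ(k + α d²)` solutions `c`,
where `χ` is the quadratic character, so there are `q + ∑_d χ(k + α d²)` solutions in all.
Substituting `t = d²` (each `t` is hit `1 + χ t` times) turns the character sum into
`∑_t χ(α t² + k t) + ∑_t χ(k + α t) = -χ(α) + 0 = 1`.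
-/

open Finset

section QuadraticCharSums

variable {F : Type*} [Field F] [Fintype F] [DecidableEq F]

lemma sum_comp_sq_eq_sum_quadraticChar_add_one_mul (hF : ringChar F ≠ 2) (f : F → ℤ) :
    ∑ d : F, f (d ^ 2) = ∑ t : F, (quadraticChar F t + 1) * f t := by
  rw [← sum_fiberwise' univ (fun d : F => d ^ 2) f]
  refine sum_congr rfl fun t _ => ?_
  rw [sum_const, nsmul_eq_mul, ← quadraticChar_card_sqrts hF t, Set.toFinset_ofPred]

lemma quadraticChar_sum_add_mul (hF : ringChar F ≠ 2) (a : F) {b : F} (hb : b ≠ 0) :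
    ∑ t : F, quadraticChar F (a + b * t) = 0 := by
  rw [← quadraticChar_sum_zero hF]
  exact Fintype.sum_bijective _ ((Equiv.mulLeft₀ b hb).trans (Equiv.addLeft a)).bijective _ _
    fun _ => rfl

lemma quadraticChar_sum_mul_sq_add_mul (hF : ringChar F ≠ 2) (a : F) {b : F} (hb : b ≠ 0) :
    ∑ t : F, quadraticChar F (a * t ^ 2 + b * t) = -quadraticChar F a := by
  -- for `t ≠ 0`, `a t² + b t = t² (a + b t⁻¹)`, and `t ↦ t⁻¹` permutes `F`
  have hinv : ∑ t : F, quadraticChar F (a + b * t⁻¹) = 0 := by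
    rw [← quadraticChar_sum_add_mul hF a hb]
    exact Fintype.sum_equiv (Equiv.inv F) _ _ fun _ => rfl
  have hterm : ∀ t ∈ ({0}ᶜ : Finset F),
      quadraticChar F (a * t ^ 2 + b * t) = quadraticChar F (a + b * t⁻¹) := by
    intro t ht
    have ht0 : t ≠ 0 := by simpa using ht
    rw [show a * t ^ 2 + b * t = t ^ 2 * (a + b * t⁻¹) by field_simp, map_mul,
      quadraticChar_sq_one' ht0, one_mul]
  rw [Fintype.sum_eq_add_sum_compl 0] at hinv
  rw [Fintype.sum_eq_add_sum_compl 0, sum_congr rfl hterm]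
  simp only [inv_zero, mul_zero, add_zero, zero_pow two_ne_zero, MulChar.map_zero, zero_add]
    at hinv ⊢
  linarith

lemma quadraticChar_sum_add_mul_sq (hF : ringChar F ≠ 2) {a : F} (ha : a ≠ 0) {b : F}
    (hb : b ≠ 0) : ∑ d : F, quadraticChar F (b + a * d ^ 2) = -quadraticChar F a := by
  rw [sum_comp_sq_eq_sum_quadraticChar_add_one_mul hF (fun t => quadraticChar F (b + a * t))]
  simp only [add_one_mul, sum_add_distrib, ← map_mul, quadraticChar_sum_add_mul hF b ha, add_zero]
  rw [← quadraticChar_sum_mul_sq_add_mul hF a hb]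
  exact sum_congr rfl fun t _ => by ring_nf

lemma card_sq_sub_mul_sq_eq (hF : ringChar F ≠ 2) (a k : F) :
    (#{cd : F × F | cd.1 ^ 2 - a * cd.2 ^ 2 = k} : ℤ)
      = Fintype.card F + ∑ d : F, quadraticChar F (k + a * d ^ 2) := by
  have hfiber : #{cd : F × F | cd.1 ^ 2 - a * cd.2 ^ 2 = k}
      = ∑ d : F, #{x : F | x ^ 2 = k + a * d ^ 2}.toFinset := by
    simp only [card_filter, Fintype.sum_prod_type_right, Set.toFinset_ofPred, sub_eq_iff_eq_add]
  rw [hfiber, Nat.cast_sum, sum_congr rfl fun d _ => quadraticChar_card_sqrts hF _,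
    sum_add_distrib, sum_const, card_univ, nsmul_one, add_comm]

theorem card_sq_sub_mul_sq_eq_of_not_isSquare (hF : ringChar F ≠ 2) {a : F}
    (ha : ¬IsSquare a) {k : F} (hk : k ≠ 0) :
    #{cd : F × F | cd.1 ^ 2 - a * cd.2 ^ 2 = k} = Fintype.card F + 1 := by
  have ha0 : a ≠ 0 := by rintro rfl; exact ha ⟨0, by simp⟩
  zify
  rw [card_sq_sub_mul_sq_eq hF, quadraticChar_sum_add_mul_sq hF ha0 hk,
    quadraticChar_neg_one_iff_not_isSquare.mpr ha, neg_neg]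

end QuadraticCharSums

/-- For `p` an odd prime, `α` a non-square in `𝔽_p`, and `k ≠ 0`, the equation
`c² − α·d² = k` has exactly `p + 1` solutions `(c, d)`. -/
theorem card_solutions_sub_sq_eq (p : ℕ) [Fact p.Prime] (hp : p ≠ 2) (α : ZMod p)
    (hα : ¬ IsSquare α) (k : ZMod p) (hk : k ≠ 0) :
    (Finset.univ.filter fun cd : ZMod p × ZMod p =>
      cd.1 ^ 2 - α * cd.2 ^ 2 = k).card = p + 1 := by
  simpa only [ZMod.card] using
    card_sq_sub_mul_sq_eq_of_not_isSquare (by rwa [ZMod.ringChar_zmod_n]) hα hk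
end

section
/- Let r ∈ K satisfy r⁵ + 25r − 25 = 0, and let x, y ∈ K satisfy f⁺(x, y) = 0 and ‖y‖⁴ = 5⁻³ (i.e. the 5-adic valuation of y is 3/4). Then ‖x − r‖² = 5⁻¹ (i.e. x − r has 5-adic valuation 1/2). -/
/-- The defining polynomial of the plane model of `X₀(125)⁺`. -/
def fplus {K : Type*} [Field K] (x y : K) : K :=
  y ^ 4 - x ^ 5 + 5 * x * y ^ 3 + 15 * x ^ 2 * y ^ 2 + 25 * x ^ 3 * y + 25 * x ^ 4 +
    5 * y ^ 3 + 5 * x * y ^ 2 - 25 * x ^ 3 + 15 * y ^ 2 + 25 * x ^ 2 + 25 * y - 25 * x + 25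

/-!
Write `w` for the additive valuation with `w 5 = 1`. The Newton polygons of `t⁵ + 25t - 25` and,
once `w y = 3/4`, of `f⁺(·, y)` are single segments of slope `-2/5`, so `w r = w x = 2/5`.
Taylor expansion at `r` turns `x⁵ + 25x - 25` into a quintic in `u = x - r` whose coefficients are
controlled by `w r`; on the curve `x⁵ + 25x - 25` is `15y²` plus terms of valuation `> 5/2`, so
the Newton polygon in `u` is a single segment of slope `-1/2`, i.e. `w (x - r) = 1/2`.
All valuations involved lie in `(1/20)ℤ`, so absolute values are written as powers of
`c = 5^(-1/20)`.
-/

namespace IsNonarchimedean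

section

variable {R α : Type*} [LinearOrder R] {f : α → R}

lemma apply_add_le [Add α] (hf : IsNonarchimedean f) {a b : α} {M : R} (ha : f a ≤ M)
    (hb : f b ≤ M) : f (a + b) ≤ M :=
  (hf a b).trans (max_le ha hb)

lemma apply_add_lt [Add α] (hf : IsNonarchimedean f) {a b : α} {M : R} (ha : f a < M)
    (hb : f b < M) : f (a + b) < M :=
  (hf a b).trans_lt (max_lt ha hb)

lemma apply_sum_lt {ι : Type*} [AddCommMonoid α] (hf : IsNonarchimedean f) {s : Finset ι}
    {g : ι → α} {M : R} (h0 : f 0 < M) (hg : ∀ i ∈ s, f (g i) < M) : f (∑ i ∈ s, g i) < M :=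
  Finset.sum_induction g (f · < M) (fun _ _ ↦ hf.apply_add_lt) h0 hg

end

section

variable {K : Type*} [Field K] {v : AbsoluteValue K ℝ} {n : ℕ} {a : Fin (n + 1) → K} {t : K}
  {ρ : ℝ}

lemma le_apply_of_root_of_single_slope (hna : IsNonarchimedean v)
    (ht : t ^ (n + 1) + ∑ i, a i * t ^ (i : ℕ) = 0) (h0 : ρ ^ (n + 1) ≤ v (a 0))
    (ha : ∀ i, v (a i) ≤ ρ ^ (n + 1 - i)) : ρ ≤ v t := by
  by_contra! hlt
  have hρ : 0 < ρ := (v.nonneg t).trans_lt hlt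
  have hterm (i : Fin n) : v (a i.succ * t ^ (i.succ : ℕ)) < ρ ^ (n + 1) :=
    calc v (a i.succ * t ^ (i.succ : ℕ)) = v (a i.succ) * v t ^ ((i : ℕ) + 1) := by simp
      _ < ρ ^ (n - (i : ℕ)) * ρ ^ ((i : ℕ) + 1) :=
        mul_lt_mul_of_le_of_lt_of_nonneg_of_pos (by simpa using ha i.succ)
          (pow_lt_pow_left₀ hlt (v.nonneg t) (by omega)) (by positivity) (by positivity)
      _ = ρ ^ (n + 1) := by rw [← pow_add]; congr 1; omega
  have hrest : v (t ^ (n + 1) + ∑ i : Fin n, a i.succ * t ^ (i.succ : ℕ)) < ρ ^ (n + 1) :=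
    hna.apply_add_lt (by simpa using pow_lt_pow_left₀ hlt (v.nonneg t) n.succ_ne_zero)
      (hna.apply_sum_lt (by simpa using pow_pos hρ _) fun i _ ↦ hterm i)
  have h0eq : a 0 = -(t ^ (n + 1) + ∑ i : Fin n, a i.succ * t ^ (i.succ : ℕ)) := by
    rw [Fin.sum_univ_succ, Fin.val_zero, pow_zero, mul_one] at ht
    linear_combination ht
  rw [h0eq, AbsoluteValue.map_neg] at h0
  exact h0.not_gt hrest

lemma apply_le_of_root_of_single_slope (hna : IsNonarchimedean v)
    (ht : t ^ (n + 1) + ∑ i, a i * t ^ (i : ℕ) = 0)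
    (ha : ∀ i, v (a i) ≤ ρ ^ (n + 1 - i)) : v t ≤ ρ := by
  by_contra! hlt
  have hρ : 0 ≤ ρ := by simpa using (v.nonneg _).trans (ha (Fin.last n))
  have hvt : 0 < v t := hρ.trans_lt hlt
  have hterm (i : Fin (n + 1)) : v (a i * t ^ (i : ℕ)) < v t ^ (n + 1) :=
    calc v (a i * t ^ (i : ℕ)) = v (a i) * v t ^ (i : ℕ) := by simp
      _ < v t ^ (n + 1 - i) * v t ^ (i : ℕ) :=
        mul_lt_mul_of_pos_right ((ha i).trans_lt (pow_lt_pow_left₀ hlt hρ (by omega)))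
          (pow_pos hvt _)
      _ = v t ^ (n + 1) := by rw [← pow_add]; congr 1; omega
  have hsum := hna.apply_sum_lt (s := .univ) (by simpa using pow_pos hvt _) fun i _ ↦ hterm i
  rw [eq_neg_of_add_eq_zero_right ht, AbsoluteValue.map_neg, map_pow] at hsum
  exact hsum.false

theorem apply_eq_of_root_of_single_slope (hna : IsNonarchimedean v)
    (ht : t ^ (n + 1) + ∑ i, a i * t ^ (i : ℕ) = 0) (h0 : ρ ^ (n + 1) ≤ v (a 0))
    (ha : ∀ i, v (a i) ≤ ρ ^ (n + 1 - i)) : v t = ρ :=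
  le_antisymm (hna.apply_le_of_root_of_single_slope ht ha)
    (hna.le_apply_of_root_of_single_slope ht h0 ha)

theorem apply_eq_of_quintic_root_of_single_slope (hna : IsNonarchimedean v)
    {a₀ a₁ a₂ a₃ a₄ : K} (ht : t ^ 5 + a₄ * t ^ 4 + a₃ * t ^ 3 + a₂ * t ^ 2 + a₁ * t + a₀ = 0)
    (h₀ : v a₀ = ρ ^ 5) (h₁ : v a₁ ≤ ρ ^ 4) (h₂ : v a₂ ≤ ρ ^ 3) (h₃ : v a₃ ≤ ρ ^ 2)
    (h₄ : v a₄ ≤ ρ) : v t = ρ := by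
  refine hna.apply_eq_of_root_of_single_slope (n := 4) (a := ![a₀, a₁, a₂, a₃, a₄]) ?_ h₀.ge ?_
  · simpa [Fin.sum_univ_five, add_assoc, add_comm, add_left_comm] using ht
  · intro i
    fin_cases i <;> simp [h₀.le, h₁, h₂, h₃, h₄]

end

end IsNonarchimedean

lemma exists_pos_lt_one_pow_twenty_eq_inv_five : ∃ c : ℝ, 0 < c ∧ c < 1 ∧ c ^ 20 = 5⁻¹ := by
  refine ⟨(5⁻¹ : ℝ) ^ ((20 : ℕ)⁻¹ : ℝ), by positivity, ?_,
    Real.rpow_inv_natCast_pow (by norm_num) (by norm_num)⟩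
  rw [← pow_lt_one_iff_of_nonneg (by positivity) (by norm_num : 20 ≠ 0),
    Real.rpow_inv_natCast_pow (by norm_num) (by norm_num)]
  norm_num

section PAdicRestriction

variable {K : Type*} [Field K] {v : AbsoluteValue K ℝ} {p : ℕ} [Fact p.Prime]

lemma abv_natCast_eq_one_of_not_dvd (hQ : ∀ q : ℚ, v q = padicNorm p q) {n : ℕ} (hn : ¬p ∣ n) :
    v n = 1 := by
  have h := hQ n
  rw [(padicNorm.nat_eq_one_iff n).2 hn] at h
  simpa using h

lemma abv_prime_eq_inv (hQ : ∀ q : ℚ, v q = padicNorm p q) : v p = (p : ℝ)⁻¹ := by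
  have h := hQ p
  rw [padicNorm.padicNorm_p_of_prime] at h
  simpa using h

end PAdicRestriction

section FiveAdic

variable {K : Type*} [Field K] {v : AbsoluteValue K ℝ} {c : ℝ}

def quintic (t : K) : K := t ^ 5 + 25 * t - 25

lemma abv_ten (h2 : v 2 = 1) (h5 : v 5 = c ^ 20) : v (10 : K) = c ^ 20 := by
  rw [show (10 : K) = 2 * 5 by norm_num, map_mul, h2, h5, one_mul]

lemma abv_fifteen (h3 : v 3 = 1) (h5 : v 5 = c ^ 20) : v (15 : K) = c ^ 20 := by
  rw [show (15 : K) = 3 * 5 by norm_num, map_mul, h3, h5, one_mul]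

lemma abv_twentyFive (h5 : v 5 = c ^ 20) : v (25 : K) = c ^ 40 := by
  rw [show (25 : K) = 5 * 5 by norm_num, map_mul, h5, ← pow_add]

lemma abv_eq_of_quintic_eq_zero (hna : IsNonarchimedean v) (hc0 : 0 < c) (hc1 : c < 1)
    (h5 : v 5 = c ^ 20) {r : K} (hr : quintic r = 0) : v r = c ^ 8 := by
  have h25 := abv_twentyFive h5
  refine hna.apply_eq_of_quintic_root_of_single_slope (a₀ := -25) (a₁ := 25) (a₂ := 0) (a₃ := 0)
    (a₄ := 0) ?_ ?_ ?_ ?_ ?_ ?_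
  · unfold quintic at hr
    linear_combination hr
  all_goals simp [h25, ← pow_mul, pow_le_pow_iff_right_of_lt_one₀ hc0 hc1, pow_nonneg hc0.le]

lemma abv_eq_of_fplus_eq_zero (hna : IsNonarchimedean v) (hc0 : 0 < c) (hc1 : c < 1)
    (h3 : v 3 = 1) (h5 : v 5 = c ^ 20) {x y : K} (hy : v y = c ^ 15) (hf : fplus x y = 0) :
    v x = c ^ 8 := by
  have h15 := abv_fifteen h3 h5
  have h25 := abv_twentyFive h5
  have hconst : v (y ^ 4 + 5 * y ^ 3 + 15 * y ^ 2 + 25 * y + 25) = c ^ 40 := by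
    rw [add_comm, hna.add_eq_left_of_lt] <;> rw [h25]
    repeat' apply hna.apply_add_lt
    all_goals simp only [map_mul, map_pow, h5, h15, h25, hy, ← pow_mul, ← pow_add,
      pow_lt_pow_iff_right_of_lt_one₀ hc0 hc1]
    all_goals norm_num
  refine hna.apply_eq_of_quintic_root_of_single_slope
    (a₀ := -(y ^ 4 + 5 * y ^ 3 + 15 * y ^ 2 + 25 * y + 25)) (a₁ := 25 - 5 * y ^ 3 - 5 * y ^ 2)
    (a₂ := -(15 * y ^ 2 + 25)) (a₃ := 25 - 25 * y) (a₄ := -25) ?_ ?_ ?_ ?_ ?_ ?_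
  · unfold fplus at hf
    linear_combination -hf
  · rw [AbsoluteValue.map_neg, hconst, ← pow_mul]
  all_goals simp only [sub_eq_add_neg, AbsoluteValue.map_neg]
  all_goals repeat' apply hna.apply_add_le
  all_goals simp only [AbsoluteValue.map_neg, map_mul, map_pow, h5, h15, h25, hy, ← pow_mul,
    ← pow_add, pow_le_pow_iff_right_of_lt_one₀ hc0 hc1]
  all_goals norm_num

lemma abv_quintic_of_fplus_eq_zero (hna : IsNonarchimedean v) (hc0 : 0 < c) (hc1 : c < 1)
    (h3 : v 3 = 1) (h5 : v 5 = c ^ 20) {x y : K} (hx : v x = c ^ 8) (hy : v y = c ^ 15)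
    (hf : fplus x y = 0) : v (quintic x) = c ^ 50 := by
  have h15 := abv_fifteen h3 h5
  have hquintic : quintic x = 15 * y ^ 2 + (y ^ 4 + 5 * x * y ^ 3 + 15 * x ^ 2 * y ^ 2
      + 25 * x ^ 3 * y + 25 * x ^ 4 + 5 * y ^ 3 + 5 * x * y ^ 2 + -(25 * x ^ 3) + 25 * x ^ 2
      + 25 * y) := by
    unfold quintic; unfold fplus at hf
    linear_combination -hf
  rw [hquintic, hna.add_eq_left_of_lt] <;> rw [map_mul, map_pow, h15, hy, ← pow_mul, ← pow_add]
  repeat' apply hna.apply_add_lt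
  all_goals simp only [AbsoluteValue.map_neg, map_mul, map_pow, h5, h15, abv_twentyFive h5, hx,
    hy, ← pow_mul, ← pow_add, pow_lt_pow_iff_right_of_lt_one₀ hc0 hc1]
  all_goals norm_num

lemma abv_sub_eq_of_abv_quintic (hna : IsNonarchimedean v) (hc0 : 0 < c) (hc1 : c < 1)
    (h2 : v 2 = 1) (h5 : v 5 = c ^ 20) {r x : K} (hr : quintic r = 0) (hvr : v r = c ^ 8)
    (hx : v (quintic x) = c ^ 50) : v (x - r) = c ^ 10 := by
  refine hna.apply_eq_of_quintic_root_of_single_slope (a₀ := -quintic x) (a₁ := 25 + 5 * r ^ 4)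
    (a₂ := 10 * r ^ 3) (a₃ := 10 * r ^ 2) (a₄ := 5 * r) ?_ ?_ ?_ ?_ ?_ ?_
  · unfold quintic at hr ⊢
    linear_combination -hr
  · rw [AbsoluteValue.map_neg, hx, ← pow_mul]
  all_goals repeat' apply hna.apply_add_le
  all_goals simp only [map_mul, map_pow, h5, abv_ten h2 h5, abv_twentyFive h5, hvr, ← pow_mul,
    ← pow_add, pow_le_pow_iff_right_of_lt_one₀ hc0 hc1]
  all_goals norm_num

end FiveAdic

/-- If `r⁵ + 25r − 25 = 0`, `f⁺(x, y) = 0` and `‖y‖⁴ = 5⁻³` (i.e. `v₅(y) = 3/4`),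
then `‖x − r‖² = 5⁻¹` (i.e. `v₅(x − r) = 1/2`). -/
theorem abs_x_sub_r_on_affinoid {K : Type*} [Field K]
    (v : AbsoluteValue K ℝ) (hna : IsNonarchimedean v)
    (hQ : ∀ q : ℚ, v (q : K) = (padicNorm 5 q : ℝ))
    (r x y : K) (hr : r ^ 5 + 25 * r - 25 = 0)
    (hf : fplus x y = 0) (hy : v y ^ 4 = (5 : ℝ)⁻¹ ^ 3) :
    v (x - r) ^ 2 = (5 : ℝ)⁻¹ := by
  have : Fact (Nat.Prime 5) := ⟨by norm_num⟩
  obtain ⟨c, hc0, hc1, hc⟩ := exists_pos_lt_one_pow_twenty_eq_inv_five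
  have h2 : v 2 = 1 := by exact_mod_cast abv_natCast_eq_one_of_not_dvd hQ (n := 2) (by norm_num)
  have h3 : v 3 = 1 := by exact_mod_cast abv_natCast_eq_one_of_not_dvd hQ (n := 3) (by norm_num)
  have h5 : v 5 = c ^ 20 := by rw [hc]; exact_mod_cast abv_prime_eq_inv hQ
  have hvy : v y = c ^ 15 :=
    (pow_left_inj₀ (v.nonneg y) (by positivity) (by norm_num : 4 ≠ 0)).1 (by rw [hy, ← hc]; ring)
  have hvr := abv_eq_of_quintic_eq_zero hna hc0 hc1 h5 hr
  have hvx := abv_eq_of_fplus_eq_zero hna hc0 hc1 h3 h5 hvy hf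
  have hq := abv_quintic_of_fplus_eq_zero hna hc0 hc1 h3 h5 hvx hvy hf
  rw [abv_sub_eq_of_abv_quintic hna hc0 hc1 h2 h5 hr hvr hq, ← hc]
  ring
end

section
/- Every y ∈ K for which there exists x ∈ K with y² = 20x and f⁺(x, y) = 0 satisfies ‖y‖¹⁰ = 5⁻⁷; that is, the y-coordinates of all 10 ramification points of X₀(125) → X₀(125)⁺ have 5-adic valuation 7/10. -/
/-!
`P(Y) = −20⁵ · f⁺(Y²/20, Y)` is a monic integer polynomial of degree 10 whose constant
coefficient has 5-adic valuation exactly 7, while the coefficient of `Yⁱ` has valuation at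
least `7 (10 - i) / 10`. So its 5-adic Newton polygon is the single segment from `(0, 7)` to
`(10, 0)`: if `‖y‖¹⁰ ≠ 5⁻⁷`, either the leading or the constant term of `P(y)` strictly dominates
all others, and the ultrametric inequality gives `P(y) ≠ 0`.
-/

open Polynomial

namespace IsNonarchimedean

variable {R : Type*} [CommRing R] {v : AbsoluteValue R ℝ}

theorem abv_eval_eq_of_dominant (hv : IsNonarchimedean v) {p : R[X]} {y : R} {k : ℕ}
    (hk : k ≤ p.natDegree)
    (h : ∀ j ≤ p.natDegree, j ≠ k → v (p.coeff j * y ^ j) < v (p.coeff k * y ^ k)) :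
    v (p.eval y) = v (p.coeff k * y ^ k) := by
  rw [eval_eq_sum_range]
  exact hv.apply_sum_eq_of_lt (fun a ↦ (v.map_neg a).symm) (Finset.mem_range_succ_iff.2 hk)
    fun j hj ↦ h j (Finset.mem_range_succ_iff.1 hj)

theorem abv_eq_of_eval_eq_zero [Nontrivial R] (hv : IsNonarchimedean v) {p : R[X]}
    (hp : p.Monic) {y : R} (hy : p.eval y = 0) {r : ℝ} (hr : 0 ≤ r)
    (h0 : v (p.coeff 0) = r ^ p.natDegree)
    (hcoeff : ∀ i < p.natDegree, v (p.coeff i) ≤ r ^ (p.natDegree - i)) : v y = r := by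
  set n := p.natDegree
  have hle : ∀ j ≤ n, v (p.coeff j) ≤ r ^ (n - j) := by
    intro j hj
    rcases hj.lt_or_eq with hj | rfl
    · exact hcoeff j hj
    · simp [n, hp.coeff_natDegree]
  have hterm : ∀ j, v (p.coeff j * y ^ j) = v (p.coeff j) * v y ^ j := fun j ↦ by
    rw [map_mul, map_pow]
  have hlead : v (p.coeff n * y ^ n) = v y ^ n := by
    rw [hterm, hp.coeff_natDegree, map_one, one_mul]
  have ht := v.nonneg y
  rcases lt_trichotomy (v y) r with hlt | heq | hgt
  · have hdom := hv.abv_eval_eq_of_dominant (k := 0) (Nat.zero_le n) fun j hj hj0 ↦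
      calc v (p.coeff j * y ^ j) ≤ r ^ (n - j) * v y ^ j := by
            rw [hterm]; gcongr; exact hle j hj
        _ < r ^ (n - j) * r ^ j :=
            mul_lt_mul_of_pos_left (pow_lt_pow_left₀ hlt ht hj0) (pow_pos (ht.trans_lt hlt) _)
        _ = v (p.coeff 0 * y ^ 0) := by
            rw [← pow_add, Nat.sub_add_cancel hj, pow_zero, mul_one, h0]
    rw [hy, map_zero, pow_zero, mul_one, h0] at hdom
    exact absurd hdom (pow_pos (ht.trans_lt hlt) n).ne
  · exact heq
  · have hdom := hv.abv_eval_eq_of_dominant le_rfl fun j hj hjn ↦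
      calc v (p.coeff j * y ^ j) ≤ r ^ (n - j) * v y ^ j := by
            rw [hterm]; gcongr; exact hle j hj
        _ < v y ^ (n - j) * v y ^ j :=
            mul_lt_mul_of_pos_right (pow_lt_pow_left₀ hgt hr (by omega))
              (pow_pos (hr.trans_lt hgt) _)
        _ = v (p.coeff n * y ^ n) := by rw [← pow_add, Nat.sub_add_cancel hj, hlead]
    rw [hy, map_zero, hlead] at hdom
    exact absurd hdom (pow_pos (hr.trans_lt hgt) n).ne

theorem abv_pow_natDegree_eq_of_eval_eq_zero [Nontrivial R] (hv : IsNonarchimedean v) {p : R[X]}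
    (hp : p.Monic) {y : R} (hy : p.eval y = 0)
    (hcoeff : ∀ i < p.natDegree,
      v (p.coeff i) ^ p.natDegree ≤ v (p.coeff 0) ^ (p.natDegree - i)) :
    v y ^ p.natDegree = v (p.coeff 0) := by
  set n := p.natDegree
  have hn : n ≠ 0 := (hp.natDegree_pos.2 (by rintro rfl; simp at hy)).ne'
  have hc := v.nonneg (p.coeff 0)
  set r := v (p.coeff 0) ^ (n⁻¹ : ℝ)
  have hr : 0 ≤ r := by positivity
  have hrn : r ^ n = v (p.coeff 0) := Real.rpow_inv_natCast_pow hc hn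
  rw [hv.abv_eq_of_eval_eq_zero hp hy hr hrn.symm fun i hi ↦ ?_, hrn]
  rw [← pow_le_pow_iff_left₀ (v.nonneg _) (by positivity) hn, pow_right_comm, hrn]
  exact hcoeff i hi

end IsNonarchimedean

theorem padicNorm_pow_le_of_dvd {p : ℕ} [Fact p.Prime] {z : ℤ} {n e : ℕ}
    (h : (p : ℤ) ^ e ∣ z ^ n) : padicNorm p z ^ n ≤ (p : ℚ)⁻¹ ^ e := by
  have := padicNorm.dvd_iff_norm_le.1 (by exact_mod_cast h)
  rwa [Int.cast_pow, IsAbsoluteValue.abv_pow (padicNorm p), zpow_neg, zpow_natCast,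
    ← inv_pow] at this

theorem padicNorm_prime_pow_mul {p : ℕ} [Fact p.Prime] (k : ℕ) {m : ℤ} (hm : ¬(p : ℤ) ∣ m) :
    padicNorm p (p ^ k * m) = (p : ℚ)⁻¹ ^ k := by
  rw [padicNorm.mul, IsAbsoluteValue.abv_pow (padicNorm p), padicNorm.padicNorm_p_of_prime,
    (padicNorm.int_eq_one_iff m).2 hm, mul_one, inv_pow]

instance Nat.fact_prime_five : Fact (Nat.Prime 5) := ⟨Nat.prime_five⟩

noncomputable def ramificationPoly : ℤ[X] :=
  X ^ 10 - 500 * X ^ 8 - 10000 * X ^ 7 - 110000 * X ^ 6 - 800000 * X ^ 5 - 4200000 * X ^ 4 -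
    16000000 * X ^ 3 - 44000000 * X ^ 2 - 80000000 * X - 80000000

theorem ramificationPoly_monic : ramificationPoly.Monic := by
  unfold ramificationPoly; monicity!

theorem natDegree_ramificationPoly : ramificationPoly.natDegree = 10 := by
  unfold ramificationPoly; compute_degree!

theorem aeval_ramificationPoly {K : Type*} [Field K] (h20 : (20 : K) ≠ 0) (y : K) :
    aeval y ramificationPoly = -20 ^ 5 * fplus (y ^ 2 / 20) y := by
  simp only [ramificationPoly, fplus, map_sub, map_mul, map_pow, aeval_X, map_ofNat]
  field_simp
  ring

theorem padicNorm_coeff_zero_ramificationPoly :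
    padicNorm 5 (ramificationPoly.coeff 0) = (5 : ℚ)⁻¹ ^ 7 := by
  have : ramificationPoly.coeff 0 = 5 ^ 7 * (-1024) := by simp [ramificationPoly]
  rw [this]
  exact_mod_cast padicNorm_prime_pow_mul (p := 5) 7 (m := -1024) (by norm_num)

theorem padicNorm_coeff_ramificationPoly_pow_le (i : ℕ) (hi : i < 10) :
    padicNorm 5 (ramificationPoly.coeff i) ^ 10 ≤
      padicNorm 5 (ramificationPoly.coeff 0) ^ (10 - i) := by
  rw [padicNorm_coeff_zero_ramificationPoly, ← pow_mul]
  refine padicNorm_pow_le_of_dvd ?_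
  interval_cases i <;> simp [ramificationPoly, coeff_X, coeff_X_pow]

/-- The `y`-coordinates of the 10 ramification points of `X₀(125) → X₀(125)⁺`
(the solutions of `y² = 20x`, `f⁺(x,y) = 0`) all satisfy `‖y‖¹⁰ = 5⁻⁷`
(5-adic valuation 7/10). -/
theorem abs_y_of_ramification_point {K : Type*} [Field K]
    (v : AbsoluteValue K ℝ) (hna : IsNonarchimedean v)
    (hQ : ∀ q : ℚ, v (q : K) = (padicNorm 5 q : ℝ)) :
    ∀ y : K, (∃ x : K, y ^ 2 = 20 * x ∧ fplus x y = 0) →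
      v y ^ 10 = (5 : ℝ)⁻¹ ^ 7 := by
  rintro y ⟨x, hx, hf⟩
  set P := ramificationPoly.map (algebraMap ℤ K)
  have hvP (i : ℕ) : v (P.coeff i) = padicNorm 5 (ramificationPoly.coeff i) := by
    simpa [P] using hQ (ramificationPoly.coeff i)
  have hdeg : P.natDegree = 10 := by
    rw [ramificationPoly_monic.natDegree_map, natDegree_ramificationPoly]
  have h20 : (20 : K) ≠ 0 := v.ne_zero_iff.1 <| by
    have := hQ 20
    push_cast at this
    rw [this]
    exact_mod_cast padicNorm.nonzero (by norm_num)
  have hroot : P.eval y = 0 := by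
    rw [eval_map_algebraMap, aeval_ramificationPoly h20, hx, mul_div_cancel_left₀ x h20, hf,
      mul_zero]
  have hcoeff : ∀ i < P.natDegree,
      v (P.coeff i) ^ P.natDegree ≤ v (P.coeff 0) ^ (P.natDegree - i) := by
    simp only [hdeg, hvP]
    exact fun i hi ↦ by exact_mod_cast padicNorm_coeff_ramificationPoly_pow_le i hi
  have := hna.abv_pow_natDegree_eq_of_eval_eq_zero (ramificationPoly_monic.map _) hroot hcoeff
  rw [hdeg, hvP, padicNorm_coeff_zero_ramificationPoly] at this
  simpa using this
end

section
/- Assume K is algebraically closed. Let r ∈ K satisfy r⁵ + 25r − 25 = 0, and let x ∈ K satisfy 5^(−1/2) < ‖x − r‖ < 5^(−2/5). Consider the monic degree-4 polynomial f⁺(x, Y) ∈ K[Y]. In its multiset of 4 roots in K, exactly 2 roots y satisfy ‖y‖² = 5·‖x − r‖⁵ (so in particular 5^(−3/4) < ‖y‖ < 5^(−1/2)), and exactly 2 roots y satisfy ‖y‖ = 5^(−1/2). -/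
/-!
From `r⁵ = 25 (1 - r)` one gets `‖r‖⁵ = 1/25`, so `t := ‖x - r‖ < ‖r‖` and `‖x‖ = ‖r‖ < 1`. Hence
the coefficients of `Y³, Y², Y` in `f⁺(x, Y)` have absolute values `≤ 1/5`, `= 1/5`, `≤ 1/25`, and
expanding around `r` shows that the constant term has absolute value exactly `t⁵`. For a root `y`,
none of the terms in `Y⁴`, `Y²`, `1` can strictly dominate the ultrametric sum `f⁺(x, y) = 0`; as
`5^(-5/2) < t⁵ < 5^(-2)`, this forces `‖y‖² = 5 t⁵` or `‖y‖² = 1/5` (the two slopes of the Newton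
polygon). The four roots have product of absolute value `t⁵`, and `(5 t⁵)ⁿ (1/5)^(4 - n) = t¹⁰`
only for `n = 2`.
-/

open Polynomial

namespace IsNonarchimedean

variable {K : Type*} [Field K] {v : AbsoluteValue K ℝ}

theorem apply_add_le_max_of_le (hna : IsNonarchimedean v) {a b : K} {A B : ℝ}
    (ha : v a ≤ A) (hb : v b ≤ B) : v (a + b) ≤ max A B :=
  (hna a b).trans (max_le_max ha hb)

theorem apply_eq_of_apply_sub_lt (hna : IsNonarchimedean v) {x r : K} (h : v (x - r) < v r) :
    v x = v r := by
  simpa using hna.add_eq_left_of_lt h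

theorem apply_aeval_le_one (hna : IsNonarchimedean v) (p : ℤ[X]) {x : K} (hx : v x ≤ 1) :
    v (aeval x p) ≤ 1 := by
  induction p using Polynomial.induction_on' with
  | add p q hp hq => simpa using hna.apply_add_le_max_of_le hp hq
  | monomial n c =>
    rw [aeval_monomial, map_mul, map_pow, algebraMap_int_eq, eq_intCast]
    exact mul_le_one₀ hna.apply_intCast_le_one (by positivity) (pow_le_one₀ (v.nonneg _) hx)

end IsNonarchimedean

theorem Multiset.prod_map_eq_pow_mul_pow {α M : Type*} [CommMonoid M] (s : Multiset α)
    (f : α → M) (p : α → Prop) [DecidablePred p] {a b : M} (ha : ∀ x ∈ s, p x → f x = a)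
    (hb : ∀ x ∈ s, ¬p x → f x = b) :
    (s.map f).prod = a ^ card (s.filter p) * b ^ card (s.filter fun x => ¬p x) := by
  have hconst : ∀ (t : Multiset α) (c : M), (∀ x ∈ t, f x = c) → (t.map f).prod = c ^ card t :=
    fun t c h => by rw [map_congr rfl h, map_const', prod_replicate]
  conv_lhs => rw [← s.filter_add_not p]
  rw [map_add, prod_add,
    hconst _ a fun x hx => ha x (mem_of_mem_filter hx) (mem_filter.1 hx).2,
    hconst _ b fun x hx => hb x (mem_of_mem_filter hx) (mem_filter.1 hx).2]

-- With `a = ‖y‖` for a root `y` and `T` the size of the constant term, `h₀`, `h₂`, `h₄` say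
-- that the terms of degree `0`, `2`, `4` do not strictly dominate the others.
theorem sq_eq_or_sq_eq_of_le_max {a T : ℝ} (ha : 0 ≤ a) (hT0 : 0 ≤ T) (hT : 1 / 3125 < T ^ 2)
    (hT' : T < 1 / 25)
    (h₀ : T ≤ max (max (max (a ^ 4) (a ^ 3 / 5)) (a ^ 2 / 5)) (a / 25))
    (h₂ : a ^ 2 / 5 ≤ max (max (max (a ^ 4) (a ^ 3 / 5)) (a / 25)) T)
    (h₄ : a ^ 4 ≤ max (max (max (a ^ 3 / 5) (a ^ 2 / 5)) (a / 25)) T) :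
    a ^ 2 = 5 * T ∨ a ^ 2 = 1 / 5 := by
  have hT125 : 1 / 125 < T := by nlinarith
  rcases lt_trichotomy (a ^ 2) (5 * T) with h | h | h
  · have ha1 : a < 1 := by nlinarith
    have ha25 : a < 25 * T := by nlinarith
    refine absurd h₀ (not_le.2 ?_)
    simp only [max_lt_iff]
    refine ⟨⟨⟨?_, ?_⟩, ?_⟩, ?_⟩ <;> nlinarith
  · exact Or.inl h
  rcases lt_trichotomy (a ^ 2) (1 / 5) with h' | h' | h'
  · have ha1 : a < 1 := by nlinarith
    have ha5 : 1 / 5 < a := by nlinarith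
    refine absurd h₂ (not_le.2 ?_)
    simp only [max_lt_iff]
    refine ⟨⟨⟨?_, ?_⟩, ?_⟩, ?_⟩ <;> nlinarith
  · exact Or.inr h'
  · have ha5 : 1 / 5 < a := by nlinarith
    have ha3 : 0 < a ^ 3 := by positivity
    refine absurd h₄ (not_le.2 ?_)
    simp only [max_lt_iff]
    refine ⟨⟨⟨?_, ?_⟩, ?_⟩, ?_⟩ <;> nlinarith

theorem eq_two_of_pow_mul_pow_eq_sq {T : ℝ} {n m : ℕ} (hT0 : 0 < T) (hT : T < 1 / 25)
    (hnm : n + m = 4) (h : (5 * T) ^ n * (1 / 5) ^ m = T ^ 2) : n = 2 := by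
  have key : (25 * T) ^ n = (25 * T) ^ 2 := by
    calc (25 * T) ^ n = (5 * T) ^ n * (1 / 5) ^ m * 5 ^ (n + m) := by
          rw [pow_add, mul_mul_mul_comm, ← mul_pow, ← mul_pow]; norm_num; ring
      _ = (25 * T) ^ 2 := by rw [h, hnm]; ring
  exact pow_right_injective₀ (by positivity) (by linarith) key

section MonicQuartic

variable {K : Type*} [Field K]

noncomputable def monicQuartic (a b c d : K) : K[X] :=
  X ^ 4 + C a * X ^ 3 + C b * X ^ 2 + C c * X + C d

theorem monic_monicQuartic (a b c d : K) : (monicQuartic a b c d).Monic := by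
  unfold monicQuartic; monicity!

theorem natDegree_monicQuartic (a b c d : K) : (monicQuartic a b c d).natDegree = 4 := by
  unfold monicQuartic; compute_degree!

theorem eval_monicQuartic (a b c d y : K) :
    (monicQuartic a b c d).eval y = y ^ 4 + a * y ^ 3 + b * y ^ 2 + c * y + d := by
  simp [monicQuartic]

theorem card_roots_monicQuartic [IsAlgClosed K] (a b c d : K) :
    Multiset.card (monicQuartic a b c d).roots = 4 := by
  rw [← natDegree_monicQuartic a b c d]
  exact splits_iff_card_roots.mp (IsAlgClosed.splits _)

theorem prod_roots_monicQuartic [IsAlgClosed K] (a b c d : K) :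
    (monicQuartic a b c d).roots.prod = d := by
  have h := (IsAlgClosed.splits (monicQuartic a b c d)).coeff_zero_eq_prod_roots_of_monic
    (monic_monicQuartic a b c d)
  rw [natDegree_monicQuartic, coeff_zero_eq_eval_zero, eval_monicQuartic] at h
  linear_combination h.symm

variable {v : AbsoluteValue K ℝ}

theorem abv_sq_of_eval_monicQuartic_eq_zero (hna : IsNonarchimedean v) {a b c d y : K}
    (ha : v a ≤ 1 / 5) (hb : v b = 1 / 5) (hc : v c ≤ 1 / 25) (hd : 1 / 3125 < v d ^ 2)
    (hd' : v d < 1 / 25) (hy : (monicQuartic a b c d).eval y = 0) :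
    v y ^ 2 = 5 * v d ∨ v y ^ 2 = 1 / 5 := by
  rw [eval_monicQuartic] at hy
  have h₄ : v (y ^ 4) ≤ v y ^ 4 := (map_pow v y 4).le
  have h₃ : v (a * y ^ 3) ≤ v y ^ 3 / 5 := by
    rw [map_mul, map_pow]; nlinarith [pow_nonneg (v.nonneg y) 3]
  have h₂ : v (b * y ^ 2) ≤ v y ^ 2 / 5 := by
    rw [map_mul, map_pow, hb]; linarith
  have h₁ : v (c * y) ≤ v y / 25 := by
    rw [map_mul]; nlinarith [v.nonneg y]
  refine sq_eq_or_sq_eq_of_le_max (v.nonneg y) (v.nonneg d) hd hd' ?_ ?_ ?_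
  · calc v d = v (y ^ 4 + a * y ^ 3 + b * y ^ 2 + c * y) := by
          rw [← v.map_neg]; congr 1; linear_combination -hy
      _ ≤ _ := hna.apply_add_le_max_of_le (hna.apply_add_le_max_of_le
          (hna.apply_add_le_max_of_le h₄ h₃) h₂) h₁
  · calc v y ^ 2 / 5 = v (b * y ^ 2) := by rw [map_mul, map_pow, hb]; ring
      _ = v (y ^ 4 + a * y ^ 3 + c * y + d) := by
          rw [← v.map_neg]; congr 1; linear_combination -hy
      _ ≤ _ := hna.apply_add_le_max_of_le (hna.apply_add_le_max_of_le
          (hna.apply_add_le_max_of_le h₄ h₃) h₁) le_rfl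
  · calc v y ^ 4 = v (y ^ 4) := (map_pow v y 4).symm
      _ = v (a * y ^ 3 + b * y ^ 2 + c * y + d) := by
          rw [← v.map_neg]; congr 1; linear_combination -hy
      _ ≤ _ := hna.apply_add_le_max_of_le (hna.apply_add_le_max_of_le
          (hna.apply_add_le_max_of_le h₃ h₂) h₁) le_rfl

theorem card_filter_roots_monicQuartic [IsAlgClosed K] (hna : IsNonarchimedean v) {a b c d : K}
    (ha : v a ≤ 1 / 5) (hb : v b = 1 / 5) (hc : v c ≤ 1 / 25) (hd : 1 / 3125 < v d ^ 2)
    (hd' : v d < 1 / 25) :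
    Multiset.card ((monicQuartic a b c d).roots.filter fun y => v y ^ 2 = 5 * v d) = 2 ∧
      Multiset.card ((monicQuartic a b c d).roots.filter fun y => v y ^ 2 = 1 / 5) = 2 := by
  set R := (monicQuartic a b c d).roots
  have hdich : ∀ y ∈ R, v y ^ 2 = 5 * v d ∨ v y ^ 2 = 1 / 5 := fun y hy =>
    abv_sq_of_eval_monicQuartic_eq_zero hna ha hb hc hd hd' (mem_roots'.1 hy).2
  have hprod := R.prod_map_eq_pow_mul_pow (fun y => v y ^ 2) (fun y => v y ^ 2 = 5 * v d)
    (fun _ _ h => h) (fun y hy h => (hdich y hy).resolve_left h)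
  rw [Multiset.prod_map_pow, ← map_multiset_prod v, prod_roots_monicQuartic] at hprod
  have hcard : Multiset.card (R.filter fun y => v y ^ 2 = 5 * v d) +
      Multiset.card (R.filter fun y => ¬v y ^ 2 = 5 * v d) = 4 := by
    rw [← Multiset.card_add, Multiset.filter_add_not, card_roots_monicQuartic]
  have hd₀ : 0 < v d := by nlinarith [v.nonneg d]
  have hn := eq_two_of_pow_mul_pow_eq_sq hd₀ hd' hcard hprod.symm
  have hcongr : (R.filter fun y => ¬v y ^ 2 = 5 * v d) = R.filter fun y => v y ^ 2 = 1 / 5 :=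
    Multiset.filter_congr fun y hy => ⟨(hdich y hy).resolve_left, fun h h' => by linarith⟩
  rw [← hcongr]
  exact ⟨hn, by omega⟩

end MonicQuartic

section FPlus

variable {K : Type*} [Field K] {v : AbsoluteValue K ℝ}

theorem abv_five_of_eq_padicNorm (hQ : ∀ q : ℚ, v (q : K) = (padicNorm 5 q : ℝ)) :
    v 5 = 1 / 5 := by
  rw [← Rat.cast_ofNat, hQ, show (5 : ℚ) = ((5 : ℕ) : ℚ) by norm_num,
    padicNorm.padicNorm_p (by norm_num)]
  norm_num

theorem abv_three_of_eq_padicNorm (hQ : ∀ q : ℚ, v (q : K) = (padicNorm 5 q : ℝ)) :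
    v 3 = 1 := by
  have : Fact (Nat.Prime 5) := ⟨Nat.prime_five⟩
  rw [← Rat.cast_ofNat, hQ, show (3 : ℚ) = ((3 : ℕ) : ℚ) by norm_num,
    (padicNorm.nat_eq_one_iff 3).2 (by norm_num)]
  norm_num

theorem abv_pow_five_eq_of_root (hna : IsNonarchimedean v) (hv5 : v 5 = 1 / 5) {r : K}
    (hr : r ^ 5 + 25 * r - 25 = 0) : v r ^ 5 = 1 / 25 := by
  have hr5 : v r ^ 5 = v (1 - r) / 25 := by
    rw [← map_pow, show r ^ 5 = 5 * 5 * (1 - r) by linear_combination hr, map_mul, map_mul, hv5]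
    ring
  have hr1 : v r < 1 := by
    by_contra! h
    have h1r : v (1 - r) ≤ v r := by
      simpa [sub_eq_add_neg, h] using hna 1 (-r)
    nlinarith [pow_le_pow_left₀ zero_le_one h 4]
  rw [hr5, sub_eq_add_neg, hna.add_eq_left_of_lt (by rwa [v.map_neg, map_one]), map_one]

theorem abv_five_mul_add_five_le (hna : IsNonarchimedean v) (hv5 : v 5 = 1 / 5) {x : K}
    (hx : v x ≤ 1) : v (5 * x + 5) ≤ 1 / 5 := by
  have h : v (x + 1) ≤ 1 := by
    have := hna.apply_aeval_le_one (X + 1) hx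
    simpa only [map_add, aeval_X, map_one] using this
  rw [show 5 * x + 5 = 5 * (x + 1) by ring, map_mul, hv5]
  linarith

theorem abv_fifteen_mul_sq_add_five_mul_add_fifteen (hna : IsNonarchimedean v)
    (hv5 : v 5 = 1 / 5) (hv3 : v 3 = 1) {x : K} (hx : v x < 1) :
    v (15 * x ^ 2 + 5 * x + 15) = 1 / 5 := by
  have h : v (x * (3 * x + 1)) < 1 := by
    have h3x : v (3 * x + 1) ≤ 1 := by
      have := hna.apply_aeval_le_one (3 * X + 1) hx.le
      simpa only [map_add, map_mul, map_ofNat, aeval_X, map_one] using this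
    rw [map_mul]
    nlinarith [v.nonneg x]
  rw [show 15 * x ^ 2 + 5 * x + 15 = 5 * (3 + x * (3 * x + 1)) by ring, map_mul, hv5,
    hna.add_eq_left_of_lt (by rwa [hv3]), hv3, mul_one]

theorem abv_twentyfive_mul_pow_three_add_twentyfive_le (hna : IsNonarchimedean v)
    (hv5 : v 5 = 1 / 5) {x : K} (hx : v x ≤ 1) : v (25 * x ^ 3 + 25) ≤ 1 / 25 := by
  have h : v (x ^ 3 + 1) ≤ 1 := by
    have := hna.apply_aeval_le_one (X ^ 3 + 1) hx
    simpa only [map_add, map_pow, aeval_X, map_one] using this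
  rw [show 25 * x ^ 3 + 25 = 5 * 5 * (x ^ 3 + 1) by ring, map_mul, map_mul, hv5]
  nlinarith [v.nonneg (x ^ 3 + 1)]

theorem abv_fPlus_eval_zero (hna : IsNonarchimedean v) (hv5 : v 5 = 1 / 5) {r x : K}
    (hr : r ^ 5 + 25 * r - 25 = 0) (hρ : v r ^ 5 = 1 / 25) (hx : v x = v r)
    (htρ : v (x - r) < v r) (ht : 1 / 5 < v (x - r) ^ 2) :
    v (-x ^ 5 + 25 * x ^ 4 - 25 * x ^ 3 + 25 * x ^ 2 - 25 * x + 25) = v (x - r) ^ 5 := by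
  set t := v (x - r)
  set ρ := v r
  have ht0 : 0 ≤ t := v.nonneg _
  have hρ0 : 0 ≤ ρ := v.nonneg _
  have hρ1 : ρ ≤ 1 :=
    (pow_le_one_iff_of_nonneg hρ0 (n := 5) (by norm_num)).1 (by rw [hρ]; norm_num)
  have hρ4 : ρ ^ 4 ≤ 1 / 5 := by nlinarith
  -- Since `r ^ 5 = 25 - 25 r`, expanding `x = r + (x - r)` leaves `-(x - r) ^ 5` as the only
  -- term not divisible by `25` or by `5 (x - r)`.
  have key : -x ^ 5 + 25 * x ^ 4 - 25 * x ^ 3 + 25 * x ^ 2 - 25 * x + 25 =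
      -(x - r) ^ 5 + (-(5 * (x - r) * (r * x * (x ^ 2 - x * r + r ^ 2) + 5)) +
        5 * 5 * x ^ 2 * (x ^ 2 - x + 1)) := by
    linear_combination (-1 : K) * hr
  have hquad : v (x ^ 2 - x * r + r ^ 2) ≤ ρ ^ 2 := by
    have h₁ : v (x ^ 2) ≤ ρ ^ 2 := by rw [map_pow, hx]
    have h₂ : v (-(x * r)) ≤ ρ ^ 2 := by rw [v.map_neg, map_mul, hx, sq]
    have h₃ : v (r ^ 2) ≤ ρ ^ 2 := by rw [map_pow]
    simpa only [← sub_eq_add_neg, max_self]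
      using hna.apply_add_le_max_of_le (hna.apply_add_le_max_of_le h₁ h₂) h₃
  have hE₁ : v (5 * (x - r) * (r * x * (x ^ 2 - x * r + r ^ 2) + 5)) ≤ t / 25 := by
    have hg : v (r * x * (x ^ 2 - x * r + r ^ 2) + 5) ≤ 1 / 5 := by
      refine (hna.apply_add_le_max_of_le (B := 1 / 5) ?_ hv5.le).trans (max_self _).le
      rw [map_mul, map_mul, hx]
      nlinarith [v.nonneg (x ^ 2 - x * r + r ^ 2), mul_nonneg hρ0 hρ0]
    rw [map_mul, map_mul, hv5]
    nlinarith [v.nonneg (r * x * (x ^ 2 - x * r + r ^ 2) + 5)]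
  have hE₂ : v (5 * 5 * x ^ 2 * (x ^ 2 - x + 1)) ≤ ρ ^ 2 / 25 := by
    have h : v (x ^ 2 - x + 1) ≤ 1 := by
      have := hna.apply_aeval_le_one (X ^ 2 - X + 1) (hx.trans_le hρ1)
      simpa only [map_add, map_sub, map_pow, aeval_X, map_one] using this
    rw [map_mul, map_mul, map_mul, map_pow, hv5, hx]
    nlinarith [sq_nonneg ρ]
  have hE : v (-(5 * (x - r) * (r * x * (x ^ 2 - x * r + r ^ 2) + 5)) +
      5 * 5 * x ^ 2 * (x ^ 2 - x + 1)) < t ^ 5 := by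
    refine (hna.apply_add_le_max_of_le ((v.map_neg _).trans_le hE₁) hE₂).trans_lt (max_lt ?_ ?_)
    · have htpos : 0 < t := by nlinarith
      nlinarith [pow_pos htpos 3]
    · have ht8 : 1 / 625 < t ^ 8 := by
        nlinarith [pow_lt_pow_left₀ ht (by norm_num) (by norm_num : 4 ≠ 0)]
      have hρ5 : ρ ^ 5 < 25 * t ^ 5 * ρ ^ 3 := by
        nlinarith [pow_le_pow_left₀ ht0 htρ.le 3, pow_nonneg ht0 5]
      nlinarith [pow_pos (ht0.trans_lt htρ) 3]
  rw [key, hna.add_eq_left_of_lt (by rwa [v.map_neg, map_pow]), v.map_neg, map_pow]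

theorem card_filter_roots_fPlus [IsAlgClosed K] (hna : IsNonarchimedean v) (hv5 : v 5 = 1 / 5)
    (hv3 : v 3 = 1) {r x : K} (hr : r ^ 5 + 25 * r - 25 = 0) (ht : 1 / 5 < v (x - r) ^ 2)
    (ht' : v (x - r) ^ 5 < 1 / 25) :
    let P := monicQuartic (5 * x + 5) (15 * x ^ 2 + 5 * x + 15) (25 * x ^ 3 + 25)
      (-x ^ 5 + 25 * x ^ 4 - 25 * x ^ 3 + 25 * x ^ 2 - 25 * x + 25)
    Multiset.card (P.roots.filter fun y => v y ^ 2 = 5 * v (x - r) ^ 5) = 2 ∧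
      Multiset.card (P.roots.filter fun y => v y ^ 2 = 1 / 5) = 2 := by
  have hρ := abv_pow_five_eq_of_root hna hv5 hr
  have htρ : v (x - r) < v r := lt_of_pow_lt_pow_left₀ 5 (v.nonneg r) (hρ ▸ ht')
  have hx : v x = v r := hna.apply_eq_of_apply_sub_lt htρ
  have hx1 : v x < 1 :=
    hx ▸ (pow_lt_one_iff_of_nonneg (v.nonneg r) (n := 5) (by norm_num)).1 (by rw [hρ]; norm_num)
  have hc₀ := abv_fPlus_eval_zero hna hv5 hr hρ hx htρ ht
  rw [← hc₀]
  exact card_filter_roots_monicQuartic hna (abv_five_mul_add_five_le hna hv5 hx1.le)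
    (abv_fifteen_mul_sq_add_five_mul_add_fifteen hna hv5 hv3 hx1)
    (abv_twentyfive_mul_pow_three_add_twentyfive_le hna hv5 hx1.le)
    (by rw [hc₀]; nlinarith [pow_lt_pow_left₀ ht (by norm_num) (by norm_num : 5 ≠ 0)])
    (hc₀ ▸ ht')

end FPlus

open Polynomial in
open scoped Classical in
/-- Over algebraically closed `K`, for `r` a root of `X⁵ + 25X − 25` and `x` with
`5^(−1/2) < ‖x − r‖ < 5^(−2/5)`, the monic degree-4 polynomial `f⁺(x, Y)` has 4
roots (with multiplicity), of which exactly 2 satisfy `‖y‖² = 5‖x − r‖⁵`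
(hence `5^(−3/4) < ‖y‖ < 5^(−1/2)`) and exactly 2 satisfy `‖y‖ = 5^(−1/2)`. -/
theorem roots_of_fplus_in_y_on_annulus {K : Type*} [Field K] [IsAlgClosed K]
    (v : AbsoluteValue K ℝ) (hna : IsNonarchimedean v)
    (hQ : ∀ q : ℚ, v (q : K) = (padicNorm 5 q : ℝ))
    (r x : K) (hr : r ^ 5 + 25 * r - 25 = 0)
    (h₁ : (5 : ℝ) ^ (-(1 / 2) : ℝ) < v (x - r))
    (h₂ : v (x - r) < (5 : ℝ) ^ (-(2 / 5) : ℝ)) :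
    ∀ P : K[X],
      P = X ^ 4 + C (5 * x + 5) * X ^ 3 + C (15 * x ^ 2 + 5 * x + 15) * X ^ 2 +
          C (25 * x ^ 3 + 25) * X +
          C (-x ^ 5 + 25 * x ^ 4 - 25 * x ^ 3 + 25 * x ^ 2 - 25 * x + 25) →
      Multiset.card P.roots = 4 ∧
      Multiset.card (P.roots.filter fun y => v y ^ 2 = 5 * v (x - r) ^ 5) = 2 ∧
      Multiset.card (P.roots.filter fun y => v y = (5 : ℝ) ^ (-(1 / 2) : ℝ)) = 2 ∧
      ∀ y ∈ P.roots, v y ^ 2 = 5 * v (x - r) ^ 5 →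
        (5 : ℝ) ^ (-(3 / 4) : ℝ) < v y ∧ v y < (5 : ℝ) ^ (-(1 / 2) : ℝ) := by
  intro P hP
  have hv5 := abv_five_of_eq_padicNorm hQ
  have hv3 := abv_three_of_eq_padicNorm hQ
  have hs : ((5 : ℝ) ^ (-(1 / 2) : ℝ)) ^ 2 = 1 / 5 := by
    rw [← Real.rpow_mul_natCast (by norm_num)]; norm_num
  have hu : ((5 : ℝ) ^ (-(2 / 5) : ℝ)) ^ 5 = 1 / 25 := by
    rw [← Real.rpow_mul_natCast (by norm_num)]; norm_num
  have hw : ((5 : ℝ) ^ (-(3 / 4) : ℝ)) ^ 4 = 1 / 125 := by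
    rw [← Real.rpow_mul_natCast (by norm_num)]; norm_num
  have ht : 1 / 5 < v (x - r) ^ 2 := hs ▸ pow_lt_pow_left₀ h₁ (by positivity) two_ne_zero
  have ht' : v (x - r) ^ 5 < 1 / 25 := hu ▸ pow_lt_pow_left₀ h₂ (v.nonneg _) (by norm_num)
  obtain ⟨hA, hB⟩ := card_filter_roots_fPlus hna hv5 hv3 hr ht ht'
  subst hP
  refine ⟨card_roots_monicQuartic _ _ _ _, hA, ?_, fun y _ hy => ⟨?_, ?_⟩⟩
  · rwa [Multiset.filter_congr fun y _ =>
      ⟨fun h => h ▸ hs, fun h => (pow_left_inj₀ (v.nonneg y) (by positivity) two_ne_zero).1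
        (h.trans hs.symm)⟩]
  · refine lt_of_pow_lt_pow_left₀ 4 (v.nonneg y) ?_
    nlinarith [pow_lt_pow_left₀ ht (by norm_num) (by norm_num : 5 ≠ 0)]
  · exact lt_of_pow_lt_pow_left₀ 2 (by positivity) (by nlinarith)
end

section
/- Let t ∈ K satisfy ‖t‖⁶ ≤ 5⁻⁵ (i.e. v₅(t) ≥ 5/6), and let ψ₅ ∈ K[X] be the 5-division polynomial of the Weierstrass curve E_t : y² = x³ + t·x + 1. Then every root x ∈ K of ψ₅ satisfies ‖x‖¹² = 5. (In particular all nonzero 5-torsion points of E_t have x-coordinates of the same absolute value, so E_t has no canonical subgroup: it is too-supersingular.) -/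
/-!
With `v₅(t) ≥ 5/6`, the Newton polygon of `ψ₅` is the single segment from `(0, 0)` to `(12, 1)`:
the leading coefficient `5` has valuation `1`, the constant term `t⁶ - 32t³ - 256` is a unit, and
every other monomial `c tᵃ xᵇ` has `12 v₅(c) + 10a ≥ b` and so lies on or above the segment.
Hence if `‖x‖¹² ≠ 5`, the larger of `‖5x¹²‖` and `‖256‖ = 1` strictly exceeds every other term,
and by the ultrametric inequality `ψ₅(x) ≠ 0`.
-/

theorem IsNonarchimedean.apply_listSum_lt {α R : Type*} [AddMonoid α] [LinearOrder R]
    {f : α → R} (hna : IsNonarchimedean f) {B : R} (h0 : f 0 < B) :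
    ∀ {l : List α}, (∀ y ∈ l, f y < B) → f l.sum < B
  | [], _ => h0
  | y :: l, h => by
    rw [List.sum_cons]
    exact (hna y l.sum).trans_lt <| max_lt (h y (List.mem_cons_self ..)) <|
      hna.apply_listSum_lt h0 fun z hz => h z (List.mem_cons_of_mem y hz)

theorem inv_pow_mul_lt_max_one_pow {p q : ℝ} (hp : 1 < p) (hq0 : 0 ≤ q) (hq1 : q ≠ 1)
    {b e n : ℕ} (hbe : b ≤ e) (he : 0 < e) (hbn : b < n) :
    p⁻¹ ^ e * (p * q) ^ b < max 1 q ^ n := by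
  have hsplit : p⁻¹ ^ e * (p * q) ^ b = p⁻¹ ^ (e - b) * q ^ b := by
    rw [← Nat.sub_add_cancel hbe, pow_add, Nat.add_sub_cancel, mul_pow, mul_assoc,
      ← mul_assoc (_ ^ b), ← mul_pow, inv_mul_cancel₀ (by positivity), one_pow, one_mul]
  have hinv0 : 0 ≤ p⁻¹ := by positivity
  have hinv1 : p⁻¹ < 1 := inv_lt_one_of_one_lt₀ hp
  have hmax : 1 ≤ max 1 q ^ n := one_le_pow₀ (le_max_left 1 q)
  rw [hsplit]
  rcases Nat.eq_zero_or_pos b with rfl | hb0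
  · simpa using (pow_lt_one₀ hinv0 hinv1 he.ne').trans_le hmax
  calc p⁻¹ ^ (e - b) * q ^ b ≤ q ^ b :=
        mul_le_of_le_one_left (pow_nonneg hq0 b) (pow_le_one₀ hinv0 hinv1.le)
    _ < max 1 q ^ n := by
      rcases hq1.lt_or_gt with hq | hq
      · exact (pow_lt_one₀ hq0 hq hb0.ne').trans_le hmax
      · rw [max_eq_right hq.le]
        exact pow_lt_pow_right₀ hq hbn

structure FiveAdicMonomial where
  coeff : ℤ
  fivePow : ℕ
  tDeg : ℕ
  xDeg : ℕ

namespace FiveAdicMonomial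

variable {K : Type*} [Field K] {v : AbsoluteValue K ℝ} (μ : FiveAdicMonomial)

def eval (t x : K) : K := 5 ^ μ.fivePow * μ.coeff * t ^ μ.tDeg * x ^ μ.xDeg

/-- Since `v₅(t) ≥ 5/6`, twelve times the `5`-adic valuation of the coefficient
`5 ^ fivePow * coeff * t ^ tDeg` of `x ^ xDeg` is at least `weight`. -/
def weight : ℕ := 12 * μ.fivePow + 10 * μ.tDeg

/-- The point `(xDeg, weight / 12)` lies on or above the Newton segment from `(0, 0)` to `(12, 1)`
of `5 x¹² - 256`, and is neither of its endpoints. -/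
def LiesAboveSegment : Prop := μ.xDeg ≤ μ.weight ∧ 0 < μ.weight ∧ μ.xDeg < 12

theorem abv_eval_pow_twelve_le (hna : IsNonarchimedean v) (h5 : v 5 = 5⁻¹) {t : K}
    (ht : v t ^ 6 ≤ (5 : ℝ)⁻¹ ^ 5) (x : K) :
    v (μ.eval t x) ^ 12 ≤ (5 : ℝ)⁻¹ ^ μ.weight * (v x ^ 12) ^ μ.xDeg := by
  have hcoeff : v (μ.coeff : K) ≤ 1 := hna.apply_intCast_le_one
  have hval : v (μ.eval t x) ≤ (5 : ℝ)⁻¹ ^ μ.fivePow * v t ^ μ.tDeg * v x ^ μ.xDeg := by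
    simp only [eval, map_mul, map_pow, h5]
    gcongr
    exact mul_le_of_le_one_right (by positivity) hcoeff
  calc v (μ.eval t x) ^ 12 ≤ ((5 : ℝ)⁻¹ ^ μ.fivePow * v t ^ μ.tDeg * v x ^ μ.xDeg) ^ 12 := by
        gcongr
    _ = (5 : ℝ)⁻¹ ^ (12 * μ.fivePow) * (v t ^ 6) ^ (2 * μ.tDeg) * (v x ^ 12) ^ μ.xDeg := by
        ring
    _ ≤ (5 : ℝ)⁻¹ ^ (12 * μ.fivePow) * ((5 : ℝ)⁻¹ ^ 5) ^ (2 * μ.tDeg) * (v x ^ 12) ^ μ.xDeg := by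
        gcongr
    _ = (5 : ℝ)⁻¹ ^ μ.weight * (v x ^ 12) ^ μ.xDeg := by
        rw [weight, pow_add, ← pow_mul]; ring

theorem abv_eval_lt_max (hna : IsNonarchimedean v) (h5 : v 5 = 5⁻¹) {t : K}
    (ht : v t ^ 6 ≤ (5 : ℝ)⁻¹ ^ 5) (hμ : μ.LiesAboveSegment) {x : K} (hx : v x ^ 12 ≠ 5) :
    v (μ.eval t x) < max 1 (v (5 * x ^ 12)) := by
  obtain ⟨hbe, he, hb⟩ := hμ
  have hlead : v (5 * x ^ 12) = 5⁻¹ * v x ^ 12 := by rw [map_mul, map_pow, h5]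
  refine lt_of_pow_lt_pow_left₀ 12 (le_max_of_le_left zero_le_one) ?_
  calc v (μ.eval t x) ^ 12 ≤ (5 : ℝ)⁻¹ ^ μ.weight * (5 * v (5 * x ^ 12)) ^ μ.xDeg := by
        rw [hlead, mul_inv_cancel_left₀ (by norm_num)]
        exact μ.abv_eval_pow_twelve_le hna h5 ht x
    _ < max 1 (v (5 * x ^ 12)) ^ 12 :=
        inv_pow_mul_lt_max_one_pow (by norm_num) (v.nonneg _)
          (by rw [hlead]; contrapose! hx; linarith) hbe he hb

end FiveAdicMonomial

theorem abv_pow_twelve_eq_five_of_eq_zero {K : Type*} [Field K] {v : AbsoluteValue K ℝ}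
    (hna : IsNonarchimedean v) (h5 : v 5 = 5⁻¹) (h256 : v 256 = 1) {t : K}
    (ht : v t ^ 6 ≤ (5 : ℝ)⁻¹ ^ 5) {L : List FiveAdicMonomial}
    (hL : ∀ μ ∈ L, μ.LiesAboveSegment) {x : K}
    (hx : 5 * x ^ 12 - 256 + (L.map (·.eval t x)).sum = 0) : v x ^ 12 = 5 := by
  by_contra hne
  have hrest : v (L.map (·.eval t x)).sum < max 1 (v (5 * x ^ 12)) :=
    hna.apply_listSum_lt (by simp) <| List.forall_mem_map.2 fun μ hμ =>
      μ.abv_eval_lt_max hna h5 ht (hL μ hμ) hne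
  have hlead : v (5 * x ^ 12) ≠ 1 := by
    rw [map_mul, map_pow, h5]
    contrapose! hne
    linarith
  have hdom : v (5 * x ^ 12 - 256) = max 1 (v (5 * x ^ 12)) := by
    rw [sub_eq_add_neg, hna.add_eq_max_of_ne (by rwa [v.map_neg, h256]), v.map_neg, h256,
      max_comm]
  rw [eq_neg_of_add_eq_zero_left hx, v.map_neg] at hdom
  exact hrest.ne hdom

/-- `ψ₅(x) = 5 x¹² - 256 + ∑ μ.eval t x`; the factor `5` is split off from `380`, `240` and `1600`,
whose terms would otherwise lie below the segment. -/
def divisionPolynomialFiveTail : List FiveAdicMonomial :=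
  [⟨62, 0, 1, 10⟩, ⟨76, 1, 0, 9⟩, ⟨-105, 0, 2, 8⟩, ⟨240, 0, 1, 7⟩, ⟨-300, 0, 3, 6⟩,
    ⟨-48, 1, 0, 6⟩, ⟨-696, 0, 2, 5⟩, ⟨-125, 0, 4, 4⟩, ⟨-1920, 0, 1, 4⟩, ⟨-80, 0, 3, 3⟩,
    ⟨-320, 1, 0, 3⟩, ⟨-50, 0, 5, 2⟩, ⟨-240, 0, 2, 2⟩, ⟨-100, 0, 4, 1⟩, ⟨-640, 0, 1, 1⟩,
    ⟨1, 0, 6, 0⟩, ⟨-32, 0, 3, 0⟩]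

theorem divisionPolynomialFiveTail_liesAboveSegment :
    ∀ μ ∈ divisionPolynomialFiveTail, μ.LiesAboveSegment := by
  simp [divisionPolynomialFiveTail, FiveAdicMonomial.LiesAboveSegment, FiveAdicMonomial.weight]

open Polynomial in
/-- For `v₅(t) ≥ 5/6` (i.e. `‖t‖⁶ ≤ 5⁻⁵`), every root of the 5-division polynomial
of `E_t : y² = x³ + tx + 1` satisfies `‖x‖¹² = 5`: `E_t` is too-supersingular. -/
theorem div_poly_roots_too_supersingular {K : Type*} [Field K]
    (v : AbsoluteValue K ℝ) (hna : IsNonarchimedean v)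
    (hQ : ∀ q : ℚ, v (q : K) = (padicNorm 5 q : ℝ))
    (t : K) (ht : v t ^ 6 ≤ (5 : ℝ)⁻¹ ^ 5) :
    ∀ ψ₅ : K[X],
      ψ₅ = C 5 * X ^ 12 + C (62 * t) * X ^ 10 + C 380 * X ^ 9 + C (-105 * t ^ 2) * X ^ 8 +
        C (240 * t) * X ^ 7 + C (-300 * t ^ 3 - 240) * X ^ 6 + C (-696 * t ^ 2) * X ^ 5 +
        C (-125 * t ^ 4 - 1920 * t) * X ^ 4 + C (-80 * t ^ 3 - 1600) * X ^ 3 +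
        C (-50 * t ^ 5 - 240 * t ^ 2) * X ^ 2 + C (-100 * t ^ 4 - 640 * t) * X +
        C (t ^ 6 - 32 * t ^ 3 - 256) →
      ∀ x : K, ψ₅.eval x = 0 → v x ^ 12 = 5 := by
  rintro ψ₅ rfl x hx
  have h5 : v 5 = 5⁻¹ := by
    have h := padicNorm.padicNorm_p (p := 5) (by norm_num)
    push_cast at h
    rw [← Rat.cast_ofNat, hQ, h]
    norm_num
  have h256 : v 256 = 1 := by
    have : Fact (Nat.Prime 5) := ⟨by norm_num⟩
    have h := (padicNorm.int_eq_one_iff (p := 5) 256).2 (by decide)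
    push_cast at h
    rw [← Rat.cast_ofNat, hQ, h]
    norm_num
  refine abv_pow_twelve_eq_five_of_eq_zero hna h5 h256 ht
    divisionPolynomialFiveTail_liesAboveSegment ?_
  simp only [eval_add, eval_mul, eval_pow, eval_C, eval_X] at hx
  simp only [divisionPolynomialFiveTail, FiveAdicMonomial.eval, List.map_cons, List.map_nil,
    List.sum_cons, List.sum_nil]
  linear_combination hx
end

section
/- Let u ∈ K satisfy ‖u‖² = 5⁻¹ and ‖u² − 5‖ = 5⁻¹ (i.e. v₅(u) = 1/2 and v₅(u² − 5) = 1). Then t := u⁵ + 5u⁴ + 15u³ + 25u² + 25u satisfies ‖t‖² = 5⁻⁵ (i.e. v₅(t) = 5/2). (This shows that the affinoid v₅(u² − 5) = 1 of X₀(25) is carried by π₅ onto the circle v₅(t) = 5/2 of X₀(5).) -/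
/-!
With `w = u² − 5` one has `t = u w² + 5u² (u² + 5u + 5)`. The first term has size
`‖u‖ ‖w‖² = 5^(-5/2)`, while the second has size at most `5⁻² · 5⁻¹ = 5⁻³`, since each of
`u²`, `5u`, `5` has size at most `5⁻¹`. The ultrametric inequality then gives `‖t‖ = ‖u‖ ‖w‖²`.
-/

lemma AbsoluteValue.apply_natCast_prime_of_padicNorm {K : Type*} [Field K]
    (v : AbsoluteValue K ℝ) {p : ℕ} [Fact p.Prime]
    (hQ : ∀ q : ℚ, v (q : K) = (padicNorm p q : ℝ)) : v (p : K) = (p : ℝ)⁻¹ := by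
  have h := hQ p
  rwa [padicNorm.padicNorm_p_of_prime, Rat.cast_inv, Rat.cast_natCast, Rat.cast_natCast] at h

/-- If `v₅(u) = 1/2` and `v₅(u² − 5) = 1` (i.e. `‖u‖² = 5⁻¹` and `‖u² − 5‖ = 5⁻¹`),
then `t = u(u⁴ + 5u³ + 15u² + 25u + 25)` satisfies `v₅(t) = 5/2` (`‖t‖² = 5⁻⁵`). -/
theorem pi5_image_of_E1_affinoid {K : Type*} [Field K]
    (v : AbsoluteValue K ℝ) (hna : IsNonarchimedean v)
    (hQ : ∀ q : ℚ, v (q : K) = (padicNorm 5 q : ℝ))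
    (u : K) (hu : v u ^ 2 = (5 : ℝ)⁻¹) (hu5 : v (u ^ 2 - 5) = (5 : ℝ)⁻¹) :
    v (u ^ 5 + 5 * u ^ 4 + 15 * u ^ 3 + 25 * u ^ 2 + 25 * u) ^ 2 = (5 : ℝ)⁻¹ ^ 5 := by
  have : Fact (Nat.Prime 5) := ⟨by norm_num⟩
  have h5 : v 5 = (5 : ℝ)⁻¹ := by
    exact_mod_cast v.apply_natCast_prime_of_padicNorm (p := 5) hQ
  have hu_pos : 0 < v u := (v.nonneg u).lt_of_ne fun h => by norm_num [← h] at hu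
  have hu_gt : (5 : ℝ)⁻¹ < v u := by nlinarith
  have hu_le : v u ≤ 1 := by nlinarith
  have hs : v (u ^ 2 + 5 * u + 5) ≤ (5 : ℝ)⁻¹ := by
    have h5u : v (5 * u) ≤ (5 : ℝ)⁻¹ := by
      rw [map_mul, h5]; exact mul_le_of_le_one_right (by norm_num) hu_le
    refine (hna _ _).trans (max_le ((hna _ _).trans (max_le ?_ h5u)) h5.le)
    rw [map_pow, hu]
  have hsmall : v (5 * u ^ 2 * (u ^ 2 + 5 * u + 5)) < v (u * (u ^ 2 - 5) ^ 2) := by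
    calc v (5 * u ^ 2 * (u ^ 2 + 5 * u + 5))
        ≤ (5 : ℝ)⁻¹ * (5 : ℝ)⁻¹ * (5 : ℝ)⁻¹ := by
          rw [map_mul, map_mul, map_pow, h5, hu]; gcongr
      _ < v u * (5 : ℝ)⁻¹ ^ 2 := by nlinarith
      _ = v (u * (u ^ 2 - 5) ^ 2) := by rw [map_mul, map_pow, hu5]
  calc v (u ^ 5 + 5 * u ^ 4 + 15 * u ^ 3 + 25 * u ^ 2 + 25 * u) ^ 2
      = v (u * (u ^ 2 - 5) ^ 2 + 5 * u ^ 2 * (u ^ 2 + 5 * u + 5)) ^ 2 := by ring_nf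
    _ = v u ^ 2 * ((5 : ℝ)⁻¹ ^ 2) ^ 2 := by
      rw [hna.add_eq_left_of_lt hsmall, map_mul, map_pow, hu5, mul_pow]
    _ = (5 : ℝ)⁻¹ ^ 5 := by rw [hu]; ring
end

section
/- Let t ∈ K with ‖t‖² = 5⁻¹ (i.e. v₅(t) = 1/2). Then ‖(t² + 10t + 5)³‖² ≤ 5⁻⁵ · ‖t‖²; equivalently, the value j = (t² + 10t + 5)³/t satisfies ‖j‖² ≤ 5⁻⁵; that is, v₅(j) ≥ 5/2, so j lies in the too-supersingular disk of X(1). -/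
/-! In `t² + 10t + 5` the terms `t²`, `10t` and `5` have `5`-adic valuations `1`, `3/2` and `1`
when `v₅(t) = 1/2`, so the ultrametric inequality gives `v₅(t² + 10t + 5) ≥ 1`. Cubing,
`v₅((t² + 10t + 5)³) ≥ 3 = 5/2 + v₅(t)`. -/

lemma padicNorm_intCast_le_inv_of_dvd {p : ℕ} [Fact p.Prime] {z : ℤ} (h : (p : ℤ) ∣ z) :
    padicNorm p z ≤ (p : ℚ)⁻¹ := by
  simpa using (padicNorm.dvd_iff_norm_le (n := 1)).mp (by simpa using h)

lemma AbsoluteValue.apply_intCast_le_inv_of_dvd {K : Type*} [DivisionRing K]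
    {v : AbsoluteValue K ℝ} {p : ℕ} [Fact p.Prime]
    (hQ : ∀ q : ℚ, v (q : K) = (padicNorm p q : ℝ)) {z : ℤ} (h : (p : ℤ) ∣ z) :
    v (z : K) ≤ (p : ℝ)⁻¹ := by
  rw [← Rat.cast_intCast, hQ]
  simpa using Rat.cast_le (K := ℝ) |>.mpr (padicNorm_intCast_le_inv_of_dvd h)

lemma IsNonarchimedean.apply_sq_add_ten_mul_add_five_le {R : Type*} [Ring R]
    {v : AbsoluteValue R ℝ} (hna : IsNonarchimedean v) (h10 : v 10 ≤ (5 : ℝ)⁻¹)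
    (h5 : v 5 ≤ (5 : ℝ)⁻¹) {t : R} (ht : v t ^ 2 ≤ (5 : ℝ)⁻¹) :
    v (t ^ 2 + 10 * t + 5) ≤ (5 : ℝ)⁻¹ := by
  have ht_le_one : v t ≤ 1 :=
    (pow_le_one_iff_of_nonneg (v.nonneg t) two_ne_zero).mp (ht.trans (by norm_num))
  have h10t : v (10 * t) ≤ (5 : ℝ)⁻¹ := by
    rw [map_mul]
    simpa using mul_le_mul h10 ht_le_one (v.nonneg t) (by norm_num)
  have hsq : v (t ^ 2) ≤ (5 : ℝ)⁻¹ := by rwa [sq, map_mul, ← sq]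
  exact (hna _ _).trans (max_le ((hna _ _).trans (max_le hsq h10t)) h5)

/-- If `v₅(t) = 1/2` (i.e. `‖t‖² = 5⁻¹`), then `‖(t² + 10t + 5)³‖² ≤ 5⁻⁵·‖t‖²`;
equivalently `j = (t² + 10t + 5)³/t` satisfies `‖j‖² ≤ 5⁻⁵`, i.e. `v₅(j) ≥ 5/2`,
so `j` lies in the too-supersingular disk of `X(1)`. -/
theorem image_in_too_supersingular_disk {K : Type*} [Field K]
    (v : AbsoluteValue K ℝ) (hna : IsNonarchimedean v)
    (hQ : ∀ q : ℚ, v (q : K) = (padicNorm 5 q : ℝ))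
    (t : K) (ht : v t ^ 2 = (5 : ℝ)⁻¹) :
    v ((t ^ 2 + 10 * t + 5) ^ 3) ^ 2 ≤ (5 : ℝ)⁻¹ ^ 5 * v t ^ 2 ∧
      v ((t ^ 2 + 10 * t + 5) ^ 3 / t) ^ 2 ≤ (5 : ℝ)⁻¹ ^ 5 := by
  have : Fact (Nat.Prime 5) := ⟨by norm_num⟩
  have hv (z : ℤ) (hz : (5 : ℤ) ∣ z) : v (z : K) ≤ (5 : ℝ)⁻¹ := by
    exact_mod_cast v.apply_intCast_le_inv_of_dvd hQ (p := 5) hz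
  have hpoly := hna.apply_sq_add_ten_mul_add_five_le
    (by exact_mod_cast hv 10 (by norm_num)) (by exact_mod_cast hv 5 dvd_rfl) ht.le
  have hcube : v ((t ^ 2 + 10 * t + 5) ^ 3) ^ 2 ≤ (5 : ℝ)⁻¹ ^ 5 * v t ^ 2 := by
    rw [ht, map_pow, ← pow_mul, ← pow_succ]
    exact pow_le_pow_left₀ (v.nonneg _) hpoly 6
  have hvt : 0 < v t ^ 2 := by rw [ht]; positivity
  refine ⟨hcube, ?_⟩
  rwa [map_div₀, div_pow, div_le_iff₀ hvt]
end
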